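/- arXiv:1403.4486 — 8 statements merged into one kernel-verified Lean document; each statement's English description precedes it below -/
import Mathlib

section
/- Let G be an abelian group. The function f : G → ℂ is a local polynomial if and only if for each positive integer t and each choice of elements g_1, g_2, …, g_t in G there exist natural numbers n_1, …, n_t such that Δ_{g_i}^{n_i+1} f(x) = 0 holds for i = 1, 2, …, t and for all x in the subgroup of G generated by g_1, …, g_t. -/
/-- The forward difference operator: `(Δ_h f)(x) = f(x + h) - f(x)`. -/
def fdiff {G M : Type*} [Add G] [Sub M] (h : G) (f : G → M) : G → M :=
  fun x => f (x + h) - f x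

/-- `p : H → ℂ` is a polynomial: there are additive functions `a_1, …, a_n : H → ℂ`
and a complex polynomial `P` in `n` variables with `p x = P (a_1 x, …, a_n x)`. -/
def IsPolynomialC {H : Type*} [Add H] (p : H → ℂ) : Prop :=
  ∃ (n : ℕ) (a : Fin n → H → ℂ) (P : MvPolynomial (Fin n) ℂ),
    (∀ i x y, a i (x + y) = a i x + a i y) ∧
    ∀ x, p x = MvPolynomial.eval (fun i => a i x) P

/-- `f : G → ℂ` is a local polynomial: its restriction to every finitely generated
subgroup of `G` is a polynomial. -/
def IsLocalPolynomial {G : Type*} [AddCommGroup G] (f : G → ℂ) : Prop :=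
  ∀ H : AddSubgroup G, H.FG → IsPolynomialC (fun x : H => f x)

/-!
If `f = P ∘ (a_1, …, a_n)` on a finitely generated subgroup `H` with additive `a_i`, then on
each line `x + ℕ • h` of `H` the function `f` is a one-variable polynomial of degree at most
`deg P`, so `Δ_h^(deg P + 1)` kills it.

Conversely, let `g_1, …, g_t` generate `H`. Since `Δ_{g_i}^(n_i + 1) f = 0` on `H`, the
Gregory–Newton formula holds along every line `x + ℤ • g_i`, and induction on `t` shows that
`k ↦ f (∑ k_i • g_i)` is a polynomial `P` on `ℤ^t`. Every integer relation among the `g_i` is a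
period of `P`, and the periods of a complex polynomial form a subspace of `ℂ^t`. Projecting
`ℂ^t` onto a complement of that subspace turns `k` into additive coordinates on `H`, in which
`f` is given by `P`.
-/

open Finset

section FwdDiff

variable {M M' G : Type*} [AddCommMonoid M] [AddCommMonoid M'] [AddCommGroup G]

theorem fwdDiff_iter_comp_addMonoidHom (F : M' → G) (ψ : M →+ M') (h : M) (n : ℕ) (x : M) :
    (fwdDiff h)^[n] (F ∘ ψ) x = (fwdDiff (ψ h))^[n] F (ψ x) := by
  simp [fwdDiff_iter_eq_sum_shift, map_add, map_nsmul]

theorem fwdDiff_commute (a b : M) :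
    Function.Commute (fwdDiff a) (fwdDiff b : (M → G) → M → G) := fun f => by
  funext x
  simp only [fwdDiff, add_right_comm x b a]
  abel

theorem fwdDiff_iter_eq_zero_of_forall_mem {K : AddSubmonoid M} {F : M → G}
    (hF : ∀ x ∈ K, F x = 0) {b : M} (hb : b ∈ K) (j : ℕ) {x : M} (hx : x ∈ K) :
    (fwdDiff b)^[j] F x = 0 := by
  rw [fwdDiff_iter_eq_sum_shift]
  exact sum_eq_zero fun k _ => by rw [hF _ (K.add_mem hx (K.nsmul_mem hb k)), smul_zero]

end FwdDiff

theorem Int.eq_of_fwdDiff_eq {G : Type*} [AddCommGroup G] {F Q : ℤ → G}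
    (hΔ : fwdDiff 1 F = fwdDiff 1 Q) (h0 : F 0 = Q 0) : F = Q := by
  have hper : Function.Periodic (F - Q) 1 := fun m => by
    have := congrFun hΔ m
    simp only [fwdDiff] at this
    rw [Pi.sub_apply, Pi.sub_apply, sub_eq_sub_iff_sub_eq_sub, this]
  funext n
  simpa [h0, sub_eq_zero] using hper.int_mul_eq n

/-- Unlike `shift_eq_sum_fwdDiff_iter`, this covers negative `n` too, which is where the
vanishing of `Δ_h^(N+1) f` on the line is needed. -/
theorem shift_eq_sum_ringChoose_smul_fwdDiff_iter {M G : Type*} [AddCommGroup M]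
    [AddCommGroup G] (N : ℕ) (f : M → G) (h y : M)
    (hf : ∀ m : ℤ, (fwdDiff h)^[N + 1] f (y + m • h) = 0) (n : ℤ) :
    f (y + n • h) = ∑ k ∈ range (N + 1), Ring.choose n k • (fwdDiff h)^[k] f y := by
  have hshift (F : M → G) (m : ℤ) :
      F (y + (m + 1) • h) - F (y + m • h) = fwdDiff h F (y + m • h) := by
    rw [add_zsmul, one_zsmul, ← add_assoc]
    rfl
  induction N generalizing f n with
  | zero =>
    refine congrFun (Int.eq_of_fwdDiff_eq (F := fun n : ℤ => f (y + n • h))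
      (Q := fun _ => f y) ?_ (by simp)) n |>.trans (by simp)
    funext m
    simp only [fwdDiff, sub_self]
    exact (hshift f m).trans (hf m)
  | succ N ih =>
    have hΔ := ih (fwdDiff h f) fun m => by rw [← Function.iterate_succ_apply]; exact hf m
    refine congrFun (Int.eq_of_fwdDiff_eq (F := fun n : ℤ => f (y + n • h))
      (Q := fun n : ℤ => ∑ k ∈ range (N + 2), Ring.choose n k • (fwdDiff h)^[k] f y) ?_ ?_) n
    · funext m
      simp only [fwdDiff]
      rw [hshift, hΔ m, ← sum_sub_distrib]
      conv_rhs => rw [sum_range_succ']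
      simp [Ring.choose_succ_succ, ← sub_smul, Function.iterate_succ_apply]
    · simp [sum_range_succ']

theorem Int.cast_ringChoose {𝕜 : Type*} [Field 𝕜] [CharZero 𝕜] (m : ℤ) (j : ℕ) :
    ((Ring.choose m j : ℤ) : 𝕜) = (j.factorial : 𝕜)⁻¹ * ∏ i ∈ Finset.range j, ((m : 𝕜) - i) := by
  have h := Ring.descPochhammer_eq_factorial_smul_choose m j
  rw [← Polynomial.eval_eq_smeval, descPochhammer_eval_eq_prod_range, nsmul_eq_mul] at h
  rw [eq_inv_mul_iff_mul_eq₀ (by exact_mod_cast j.factorial_ne_zero)]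
  exact_mod_cast h.symm

namespace MvPolynomial

variable {R σ : Type*} [CommRing R]

theorem exists_polynomial_eval_smul_add (P : MvPolynomial σ R) (w z : σ → R) :
    ∃ q : Polynomial R, q.natDegree ≤ P.totalDegree ∧ ∀ s, q.eval s = eval (s • w + z) P := by
  set g : σ → Polynomial R := fun i => Polynomial.X * Polynomial.C (w i) + Polynomial.C (z i)
  have hg : ∀ i, (g i).natDegree ≤ 1 := fun i => by
    refine (Polynomial.natDegree_add_le _ _).trans (max_le ?_ (by simp))
    exact (Polynomial.natDegree_mul_C_le _ _).trans Polynomial.natDegree_X_le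
  refine ⟨aeval g P, ?_, fun s => ?_⟩
  · conv_lhs => rw [P.as_sum, map_sum]
    refine Polynomial.natDegree_sum_le_of_forall_le _ _ fun d hd => ?_
    rw [aeval_monomial]
    refine (Polynomial.natDegree_C_mul_le _ _).trans ?_
    refine (Polynomial.natDegree_prod_le _ _).trans
      ((sum_le_sum fun i _ => ?_).trans (le_totalDegree hd))
    exact Polynomial.natDegree_pow_le.trans (by simpa using Nat.mul_le_mul_left (d i) (hg i))
  · rw [← Polynomial.coe_aeval_eq_eval, ← AlgHom.comp_apply, comp_aeval]
    change _ = aeval (s • w + z) P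
    congr 2
    funext i
    simp only [g, map_add, map_mul, Polynomial.aeval_X, Polynomial.aeval_C, Pi.add_apply,
      Pi.smul_apply, smul_eq_mul, Algebra.algebraMap_self, RingHom.id_apply]

theorem fwdDiff_iter_eval_eq_zero (P : MvPolynomial σ R) (v z : σ → R) :
    (fwdDiff v)^[P.totalDegree + 1] (fun x => eval x P) z = 0 := by
  obtain ⟨q, hq, hqe⟩ := exists_polynomial_eval_smul_add P v z
  let ψ : R →+ (σ → R) := (LinearMap.toSpanSingleton R (σ → R) v).toAddMonoidHom
  have hline : q.eval = (fun x => eval (x + z) P) ∘ ψ := by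
    funext s
    simp [ψ, hqe]
  calc (fwdDiff v)^[P.totalDegree + 1] (fun x => eval x P) z
      = (fwdDiff v)^[P.totalDegree + 1] (fun x => eval (x + z) P) 0 := by
        simpa using (fwdDiff_iter_comp_add v (fun x => eval x P) z (P.totalDegree + 1) 0).symm
    _ = (fwdDiff 1)^[P.totalDegree + 1] q.eval 0 := by
        rw [hline, fwdDiff_iter_comp_addMonoidHom]
        simp [ψ]
    _ = 0 := by
        rw [Polynomial.fwdDiff_iter_eq_zero_of_degree_lt (Nat.lt_succ_of_le hq), Pi.zero_apply]

section Periods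

variable [IsDomain R] [CharZero R]

def periods (P : MvPolynomial σ R) : Submodule R (σ → R) where
  carrier := {w | ∀ z, eval (w + z) P = eval z P}
  zero_mem' z := by rw [zero_add]
  add_mem' {v w} hv hw z := by rw [add_assoc, hv, hw]
  smul_mem' c w hw z := by
    -- `s ↦ eval (s • w + z) P` is a polynomial in `s` that is constant on `ℕ`.
    obtain ⟨q, -, hq⟩ := exists_polynomial_eval_smul_add P w z
    have hnat : ∀ n : ℕ, q.eval (n : R) = q.eval 0 := fun n => by
      induction n with
      | zero => simp
      | succ n ih =>
        rw [Nat.cast_succ, hq, add_smul, one_smul, add_comm _ w, add_assoc, hw, ← hq, ih]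
    have hconst : q = Polynomial.C (q.eval 0) := by
      refine Polynomial.eq_of_infinite_eval_eq _ _ ((Set.infinite_range_of_injective
        Nat.cast_injective).mono ?_)
      rintro _ ⟨n, rfl⟩
      simp [hnat n]
    rw [← hq, hconst, Polynomial.eval_C, hq, zero_smul, zero_add]

theorem eval_eq_of_sub_mem_periods {P : MvPolynomial σ R} {z z' : σ → R}
    (h : z - z' ∈ periods P) : eval z P = eval z' P := by
  simpa using h z'

theorem intCast_mem_periods {P : MvPolynomial σ R} {m : σ → ℤ}
    (hm : ∀ k : σ → ℤ, eval (fun i => ((m + k) i : R)) P = eval (fun i => (k i : R)) P) :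
    (fun i => (m i : R)) ∈ periods P := by
  have hbind : ∀ z, eval z (bind₁ (fun i => C (m i : R) + X i) P) =
      eval ((fun i => (m i : R)) + z) P := fun z => by
    refine (eval₂Hom_bind₁ (RingHom.id R) z _ P).trans ?_
    simp [Pi.add_def]
  intro z
  rw [← hbind]
  congr 1
  refine funext_set (fun _ => Set.range ((↑) : ℤ → R))
    (fun _ => Set.infinite_range_of_injective Int.cast_injective) fun x hx => ?_
  choose k hk using fun i => hx i (Set.mem_univ i)
  obtain rfl : (fun i => (k i : R)) = x := _root_.funext hk
  rw [hbind, ← hm k]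
  simp [Pi.add_def]

end Periods

end MvPolynomial

open MvPolynomial

theorem IsPolynomialC.exists_fwdDiff_iter_eq_zero {H : Type*} [AddCommMonoid H] {p : H → ℂ}
    (hp : IsPolynomialC p) : ∃ d, ∀ h x, (fwdDiff h)^[d + 1] p x = 0 := by
  obtain ⟨n, a, P, ha, hpP⟩ := hp
  let A : H →+ (Fin n → ℂ) := AddMonoidHom.mk' (fun x i => a i x) fun x y => funext (ha · x y)
  have hpA : p = (fun u => eval u P) ∘ A := funext hpP
  exact ⟨P.totalDegree, fun h x => by
    rw [hpA, fwdDiff_iter_comp_addMonoidHom, fwdDiff_iter_eval_eq_zero]⟩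

theorem exists_mvPolynomial_eval_eq_of_fwdDiff_iter_eq_zero {G 𝕜 : Type*} [AddCommGroup G]
    [Field 𝕜] [CharZero 𝕜] {K : AddSubgroup G} {T : ℕ} (g : Fin T → G) (hg : ∀ i, g i ∈ K)
    (n : Fin T → ℕ) (f : G → 𝕜) (hf : ∀ i, ∀ x ∈ K, (fwdDiff (g i))^[n i + 1] f x = 0) :
    ∃ P : MvPolynomial (Fin T) 𝕜, ∀ k : Fin T → ℤ,
      f (∑ i, k i • g i) = eval (fun i => (k i : 𝕜)) P := by
  induction T generalizing f with
  | zero => exact ⟨C (f 0), fun k => by simp⟩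
  | succ T ih =>
    have hΔf : ∀ j, ∀ i : Fin T, ∀ x ∈ K,
        (fwdDiff (g i.succ))^[n i.succ + 1] ((fwdDiff (g 0))^[j] f) x = 0 := fun j i x hx => by
      rw [((fwdDiff_commute _ _).iterate_iterate _ _).eq]
      exact fwdDiff_iter_eq_zero_of_forall_mem (K := K.toAddSubmonoid) (hf i.succ) (hg 0) j hx
    choose Q hQ using fun j =>
      ih (fun i => g i.succ) (fun i => hg i.succ) (fun i => n i.succ) _ (hΔf j)
    refine ⟨∑ j ∈ range (n 0 + 1),
      (C ((j.factorial : 𝕜)⁻¹) * ∏ i ∈ range j, (X 0 - C (i : 𝕜))) * rename Fin.succ (Q j),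
      fun k => ?_⟩
    have hmem : ∀ m : ℤ, (∑ i : Fin T, k i.succ • g i.succ) + m • g 0 ∈ K := fun m =>
      K.add_mem (K.sum_mem fun i _ => K.zsmul_mem (hg _) _) (K.zsmul_mem (hg 0) m)
    rw [Fin.sum_univ_succ, add_comm, shift_eq_sum_ringChoose_smul_fwdDiff_iter (n 0) f (g 0) _
      (fun m => hf 0 _ (hmem m)), map_sum]
    refine sum_congr rfl fun j _ => ?_
    rw [zsmul_eq_mul, Int.cast_ringChoose, hQ j (fun i => k i.succ)]
    simp [eval_rename, map_prod, Function.comp_def]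

/-- The periods of `P` contain the kernel of `π`, so projecting `ℂ^T` along them makes the
coordinates `k` of `π k` well defined and additive. -/
theorem isPolynomialC_of_surjective {H : Type*} [AddCommGroup H] {T : ℕ} (π : (Fin T → ℤ) →+ H)
    (hπ : Function.Surjective π) {p : H → ℂ} {P : MvPolynomial (Fin T) ℂ}
    (hP : ∀ k, p (π k) = eval (fun i => (k i : ℂ)) P) : IsPolynomialC p := by
  let cast : (Fin T → ℤ) →+ (Fin T → ℂ) := (Int.castAddHom ℂ).compLeft (Fin T)
  let φ : (Fin T → ℤ) →+ (Fin T → ℂ) ⧸ P.periods := P.periods.mkQ.toAddMonoidHom.comp cast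
  have hker : π.ker ≤ φ.ker := fun m hm => by
    refine (Submodule.Quotient.mk_eq_zero _).2 (intCast_mem_periods fun k => ?_)
    rw [← hP, ← hP, map_add, (AddMonoidHom.mem_ker).1 hm, zero_add]
  obtain ⟨s, hs⟩ := P.periods.mkQ.exists_rightInverse_of_surjective P.periods.range_mkQ
  let a : H →+ (Fin T → ℂ) := s.toAddMonoidHom.comp
    (π.liftOfRightInverse _ (Function.rightInverse_surjInv hπ) ⟨φ, hker⟩)
  refine ⟨T, fun i x => a x i, P, fun i x y => by simp [map_add], fun x => ?_⟩
  obtain ⟨k, rfl⟩ := hπ x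
  rw [hP]
  refine eval_eq_of_sub_mem_periods ((Submodule.Quotient.eq _).1 ?_)
  have ha : a (π k) = s (φ k) := by simp [a]
  change φ k = P.periods.mkQ (a (π k))
  rw [ha]
  exact (LinearMap.congr_fun hs (φ k)).symm

theorem AddSubgroup.FG.exists_fin_closure_range_eq {G : Type*} [AddGroup G] {H : AddSubgroup G}
    (hH : H.FG) : ∃ (t : ℕ) (g : Fin t → G), 0 < t ∧ AddSubgroup.closure (Set.range g) = H := by
  classical
  obtain ⟨S, rfl⟩ := hH
  refine ⟨(insert 0 S).card, (↑) ∘ (insert 0 S).equivFin.symm,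
    card_pos.2 (insert_nonempty _ _), ?_⟩
  rw [Set.range_comp, Equiv.range_eq_univ, Set.image_univ, Subtype.range_coe, coe_insert,
    AddSubgroup.closure_insert_zero]

theorem isPolynomialC_of_fwdDiff_iter_eq_zero {G : Type*} [AddCommGroup G] {T : ℕ}
    (g : Fin T → G) (n : Fin T → ℕ) (f : G → ℂ)
    (hf : ∀ i, ∀ x ∈ AddSubgroup.closure (Set.range g), (fwdDiff (g i))^[n i + 1] f x = 0) :
    IsPolynomialC (fun x : AddSubgroup.closure (Set.range g) => f x) := by
  obtain ⟨P, hP⟩ := exists_mvPolynomial_eval_eq_of_fwdDiff_iter_eq_zero g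
    (fun i => AddSubgroup.subset_closure (Set.mem_range_self i)) n f hf
  let π : (Fin T → ℤ) →+ AddSubgroup.closure (Set.range g) :=
    AddMonoidHom.mk' (fun k => ⟨∑ i, k i • g i,
      AddSubgroup.mem_closure_range_iff_of_fintype.2 ⟨k, rfl⟩⟩)
      fun k l => Subtype.ext (by simp [add_zsmul, sum_add_distrib])
  refine isPolynomialC_of_surjective π ?_ hP
  rintro ⟨x, hx⟩
  obtain ⟨k, rfl⟩ := AddSubgroup.mem_closure_range_iff_of_fintype.1 hx
  exact ⟨k, rfl⟩

theorem localPolynomial_iff {G : Type*} [AddCommGroup G] (f : G → ℂ) :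
    IsLocalPolynomial f ↔
      ∀ t : ℕ, 0 < t → ∀ g : Fin t → G, ∃ n : Fin t → ℕ, ∀ i : Fin t,
        ∀ x ∈ AddSubgroup.closure (Set.range g), (fdiff (g i))^[n i + 1] f x = 0 := by
  -- `fdiff` is definitionally Mathlib's `fwdDiff`, so the `fwdDiff` lemmas apply directly.
  constructor
  · classical
    intro hf t _ g
    set H := AddSubgroup.closure (Set.range g)
    obtain ⟨d, hd⟩ := (hf H ⟨univ.image g, by simp [H]⟩).exists_fwdDiff_iter_eq_zero
    refine ⟨fun _ => d, fun i x hx => ?_⟩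
    have hgi : g i ∈ H := AddSubgroup.subset_closure (Set.mem_range_self i)
    exact (fwdDiff_iter_comp_addMonoidHom f H.subtype ⟨g i, hgi⟩ (d + 1) ⟨x, hx⟩).symm.trans
      (hd _ _)
  · intro hf H hH
    obtain ⟨t, g, ht, rfl⟩ := hH.exists_fin_closure_range_eq
    obtain ⟨n, hn⟩ := hf t ht g
    exact isPolynomialC_of_fwdDiff_iter_eq_zero g n f hn
end

section
/- Let G be an abelian group generated by elements g_1, g_2, …, g_t, let f : G → ℂ, and let n_1, …, n_t be natural numbers such that Δ_{g_i}^{n_i+1} f(x) = 0 for all x ∈ G and all i = 1, …, t. Set N = n_1 + n_2 + ⋯ + n_t + t − 1. Then Δ_y^{N+1} f(x) = 0 for all x, y ∈ G. -/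
open AddMonoidAlgebra

namespace Ideal

theorem sup_pow_add_add_one_le {R : Type*} [CommSemiring R] (I J : Ideal R) (n m : ℕ) :
    (I ⊔ J) ^ (n + m + 1) ≤ I ^ (n + 1) ⊔ J ^ (m + 1) := by
  rw [← add_eq_sup, ← add_eq_sup, add_pow, sum_eq_sup]
  refine Finset.sup_le fun i hi => ?_
  by_cases hn : n + 1 ≤ i
  · exact mul_le_left.trans (mul_le_left.trans ((pow_le_pow_right hn).trans le_sup_left))
  · refine mul_le_left.trans (mul_le_right.trans ((pow_le_pow_right ?_).trans le_sup_right))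
    rw [Finset.mem_range] at hi
    omega

theorem span_image_pow_sum_add_one_le {R ι : Type*} [CommSemiring R] (s : Finset ι) (x : ι → R)
    (n : ι → ℕ) :
    span (x '' s) ^ (∑ i ∈ s, n i + 1) ≤ span ((fun i => x i ^ (n i + 1)) '' s) := by
  classical
  induction s using Finset.induction_on with
  | empty => simp
  | insert a s ha ih =>
    rw [Finset.coe_insert, Set.image_insert_eq, Set.image_insert_eq, span_insert, span_insert,
      Finset.sum_insert ha, add_assoc, ← span_singleton_pow]
    exact (sup_pow_add_add_one_le _ _ _ _).trans (sup_le_sup_left ih _)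

theorem apply_eq_zero_of_mem_span {R S V : Type*} [Semiring R] [Semiring S] [AddCommMonoid V]
    [Module S V] (ρ : R →+* Module.End S V) {s : Set R} {v : V} (hs : ∀ a ∈ s, ρ a v = 0)
    {a : R} (ha : a ∈ span s) : ρ a v = 0 := by
  induction ha using Submodule.span_induction with
  | mem a ha => exact hs a ha
  | zero => simp
  | add a b _ _ ha hb => simp [ha, hb]
  | smul b a _ ha => simp [ha]

end Ideal

theorem AddMonoidAlgebra.of'_sub_one_mem_span_of_mem_closure {k G : Type*} [CommRing k]
    [AddCommGroup G] {S : Set G} {y : G} (hy : y ∈ AddSubgroup.closure S) :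
    of' k G y - 1 ∈ Ideal.span ((fun g => of' k G g - 1) '' S) := by
  induction hy using AddSubgroup.closure_induction with
  | mem a ha => exact Ideal.subset_span ⟨a, ha, rfl⟩
  | zero => simp [of'_apply, one_def]
  | add a b _ _ ha hb =>
    have : of' k G (a + b) - 1 = (of' k G a - 1) * of' k G b + (of' k G b - 1) := by
      simp only [of'_apply, sub_mul, single_mul_single, one_mul]
      ring
    rw [this]
    exact add_mem (Ideal.mul_mem_right _ _ ha) hb
  | neg a _ ha =>
    have : of' k G (-a) - 1 = -((of' k G a - 1) * of' k G (-a)) := by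
      simp only [of'_apply, sub_mul, single_mul_single, one_mul, add_neg_cancel, ← one_def]
      ring
    rw [this]
    exact neg_mem (Ideal.mul_mem_right _ _ ha)

section Translation

variable {G M : Type*} [AddCommGroup G] [AddCommGroup M]

def translation : Multiplicative G →* Module.End ℤ (G → M) where
  toFun h := LinearMap.funLeft ℤ M (· + h.toAdd)
  map_one' := by ext; simp
  map_mul' a b := by ext; simp [add_assoc]

noncomputable def translationAlgHom : AddMonoidAlgebra ℤ G →ₐ[ℤ] Module.End ℤ (G → M) :=
  AddMonoidAlgebra.lift ℤ _ G translation

theorem coe_translationAlgHom_of'_sub_one_pow (y : G) (m : ℕ) :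
    ⇑(translationAlgHom (M := M) ((of' ℤ G y - 1) ^ m)) = (fdiff y)^[m] := by
  have : ⇑(translationAlgHom (M := M) (of' ℤ G y - 1)) = fdiff y := by
    ext f x
    simp [translationAlgHom, translation, fdiff]
  rw [map_pow, Module.End.coe_pow, this]

theorem iterate_fdiff_sum_add_one_eq_zero {ι : Type*} [Fintype ι] {g : ι → G}
    (hgen : AddSubgroup.closure (Set.range g) = ⊤) {f : G → M} {n : ι → ℕ}
    (hdiff : ∀ i, (fdiff (g i))^[n i + 1] f = 0) (y : G) :
    (fdiff y)^[∑ i, n i + 1] f = 0 := by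
  have hy := of'_sub_one_mem_span_of_mem_closure (k := ℤ) (hgen ▸ AddSubgroup.mem_top y)
  rw [← Set.range_comp, ← Set.image_univ, ← Finset.coe_univ] at hy
  have hpow := Ideal.span_image_pow_sum_add_one_le _ _ n (Ideal.pow_mem_pow hy (∑ i, n i + 1))
  rw [← coe_translationAlgHom_of'_sub_one_pow]
  refine Ideal.apply_eq_zero_of_mem_span (translationAlgHom (M := M)).toRingHom ?_ hpow
  rintro _ ⟨i, -, rfl⟩
  exact (congrFun (coe_translationAlgHom_of'_sub_one_pow _ _) f).trans (hdiff i)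

end Translation

theorem iterate_fdiff_eq_zero_of_le {G M : Type*} [Add G] [AddGroup M] {y : G} {f : G → M}
    {m k : ℕ} (hmk : m ≤ k) (h : (fdiff y)^[m] f = 0) : (fdiff y)^[k] f = 0 := by
  obtain ⟨j, rfl⟩ := Nat.exists_eq_add_of_le' hmk
  rw [Function.iterate_add_apply, h]
  exact Function.iterate_fixed (funext fun _ => sub_self 0) j

theorem iterated_diff_of_generators {G : Type*} [AddCommGroup G] {t : ℕ}
    (g : Fin t → G) (hgen : AddSubgroup.closure (Set.range g) = ⊤)
    (f : G → ℂ) (n : Fin t → ℕ)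
    (hdiff : ∀ i : Fin t, ∀ x : G, (fdiff (g i))^[n i + 1] f x = 0) :
    ∀ x y : G, (fdiff y)^[((∑ i, n i) + t - 1) + 1] f x = 0 := by
  intro x y
  have hle : ∑ i, n i + 1 ≤ ∑ i, n i + t - 1 + 1 := by
    rcases t.eq_zero_or_pos with rfl | ht
    · simp
    · omega
  have hsharp := iterate_fdiff_sum_add_one_eq_zero hgen (fun i => funext (hdiff i)) y
  rw [iterate_fdiff_eq_zero_of_le hle hsharp, Pi.zero_apply]
end

section
/- Let G be an abelian group generated by elements g_1, g_2, …, g_t. Then f : G → ℂ is a polynomial if and only if there exist natural numbers n_1, n_2, …, n_t such that Δ_{g_i}^{n_i+1} f(x) = 0 holds for all x ∈ G and all i = 1, 2, …, t. -/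
/-!
If `f = P(a₁, …, aₙ)` with additive `aⱼ`, every `aⱼ` is killed by `Δ_h²`, and the functions killed
by some power of `Δ_h` form a subalgebra (Leibniz rule for `Δ_h`), so `f` is killed as well.

Conversely, let `π : ℤᵗ → G` send the standard basis to the generators. Then `f ∘ π` is killed by a
power of each coordinate difference operator, so Newton interpolation in one coordinate at a time
writes `f ∘ π` as a polynomial `P` evaluated at integer points, with the binomial coefficients
`Ring.choose` as basis. As `f ∘ π` is periodic modulo `ker π`, and an identity between polynomials
that holds on integer points holds everywhere, `P` is constant along the complex span `W` of
`ker π`. So `P` only depends on the class in `ℂᵗ ⧸ W`, and the additive functions are the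
coordinates of `G → ℂᵗ ⧸ W → ℂᵗ`, the second map being a linear section of the quotient map.
-/

open Finset fwdDiff

section FwdDiff

variable {M N G : Type*} [AddCommMonoid M] [AddCommMonoid N] [AddCommGroup G]

lemma fdiff_eq_fwdDiff (h : M) : (fdiff h : (M → G) → M → G) = fwdDiff h := rfl

lemma fwdDiff_iter_comp_of_map_add {u : M → N} {h : M} {h' : N}
    (hu : ∀ x, u (x + h) = u x + h') (F : N → G) (k : ℕ) :
    Δ_[h] ^[k] (F ∘ u) = Δ_[h'] ^[k] F ∘ u := by
  have hsemi : Function.Semiconj (· ∘ u) (fwdDiff (G := G) h') (fwdDiff h) := fun F ↦ by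
    ext x; simp [fwdDiff, hu]
  exact (hsemi.iterate_right k F).symm

lemma fwdDiff_commute_s3 (h h' : M) : Function.Commute (fwdDiff (G := G) h) (fwdDiff h') :=
  fun F ↦ by ext x; simp only [fwdDiff, add_right_comm x h h']; abel

lemma fwdDiff_iter_zero (h : M) (k : ℕ) : Δ_[h] ^[k] (0 : M → G) = 0 := by
  simpa using fwdDiff_iter_const_smul h (0 : ℕ) (0 : M → G) k

lemma fwdDiff_iter_eq_zero_of_le {h : M} {φ : M → G} {m n : ℕ} (hmn : m ≤ n)
    (hφ : Δ_[h] ^[m] φ = 0) : Δ_[h] ^[n] φ = 0 := by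
  obtain ⟨k, rfl⟩ := Nat.exists_eq_add_of_le hmn
  rw [add_comm, Function.iterate_add_apply, hφ, fwdDiff_iter_zero]

end FwdDiff

section NilpotentSubalgebra

variable {M R : Type*} [AddCommMonoid M] [CommRing R]

lemma fwdDiff_mul (h : M) (φ ψ : M → R) :
    Δ_[h] (φ * ψ) = Δ_[h] φ * ψ + φ * Δ_[h] ψ + Δ_[h] φ * Δ_[h] ψ := by
  ext x; simp only [fwdDiff, Pi.mul_apply, Pi.add_apply]; ring

theorem fwdDiff_iter_mul_eq_zero {h : M} {φ ψ : M → R} {m n : ℕ}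
    (hφ : Δ_[h] ^[m] φ = 0) (hψ : Δ_[h] ^[n] ψ = 0) : Δ_[h] ^[m + n] (φ * ψ) = 0 := by
  induction m generalizing φ ψ n with
  | zero => simp_all [fwdDiff_iter_zero]
  | succ m ihm =>
    induction n generalizing ψ with
    | zero => simp_all [fwdDiff_iter_zero]
    | succ n ihn =>
      have hΔφ : Δ_[h] ^[m] (Δ_[h] φ) = 0 := hφ
      have hΔψ : Δ_[h] ^[n] (Δ_[h] ψ) = 0 := hψ
      have hΔφψ : Δ_[h] ^[m + 1 + n] (Δ_[h] φ * ψ) = 0 := by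
        rw [Nat.add_right_comm]; exact ihm hΔφ hψ
      rw [Nat.add_succ, Function.iterate_succ_apply, fwdDiff_mul, fwdDiff_iter_add,
        fwdDiff_iter_add, ihn hΔψ, hΔφψ, fwdDiff_iter_eq_zero_of_le (by omega) (ihm hΔφ hΔψ),
        add_zero, add_zero]

variable (R) in
def fwdDiffNilpotentSubalgebra (h : M) : Subalgebra R (M → R) where
  carrier := {φ | ∃ n, Δ_[h] ^[n] φ = 0}
  mul_mem' := fun ⟨_, hφ⟩ ⟨_, hψ⟩ ↦ ⟨_, fwdDiff_iter_mul_eq_zero hφ hψ⟩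
  add_mem' := fun {φ ψ} ⟨m, hφ⟩ ⟨n, hψ⟩ ↦ ⟨m + n, by
    rw [fwdDiff_iter_add, fwdDiff_iter_eq_zero_of_le (Nat.le_add_right m n) hφ,
      fwdDiff_iter_eq_zero_of_le (Nat.le_add_left n m) hψ, add_zero]⟩
  algebraMap_mem' r := ⟨1, fwdDiff_const h r⟩

lemma addMonoidHom_mem_fwdDiffNilpotentSubalgebra (h : M) (a : M →+ R) :
    ⇑a ∈ fwdDiffNilpotentSubalgebra R h :=
  ⟨2, by
    have hΔa : Δ_[h] a = fun _ ↦ a h := by ext x; simp [fwdDiff]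
    simp [hΔa, Pi.zero_def]⟩

lemma eval_comp_mem_fwdDiffNilpotentSubalgebra {σ : Type*} (h : M) (a : σ → M →+ R)
    (P : MvPolynomial σ R) :
    (fun x ↦ MvPolynomial.eval (fun i ↦ a i x) P) ∈ fwdDiffNilpotentSubalgebra R h := by
  have hP : (fun x ↦ MvPolynomial.eval (fun i ↦ a i x) P) =
      MvPolynomial.aeval (fun i ↦ ⇑(a i)) P := by
    ext x
    exact (MvPolynomial.comp_aeval_apply (f := fun i ↦ ⇑(a i))
      (Pi.evalAlgHom R (fun _ ↦ R) x) P).symm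
  rw [hP]
  refine Algebra.adjoin_le ?_ (by rw [Algebra.adjoin_range_eq_range_aeval]; exact ⟨P, rfl⟩)
  rintro _ ⟨i, rfl⟩
  exact addMonoidHom_mem_fwdDiffNilpotentSubalgebra h (a i)

end NilpotentSubalgebra

section Interpolation

theorem eq_sum_choose_smul_of_fwdDiff_iter_eq_zero {G : Type*} [AddCommGroup G] {ψ : ℤ → G}
    {N : ℕ} (hψ : Δ_[1] ^[N] ψ = 0) (s : ℤ) :
    ψ s = ∑ k ∈ range N, Ring.choose s k • Δ_[1] ^[k] ψ 0 := by
  induction N generalizing ψ s with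
  | zero => simpa using congrFun hψ s
  | succ N ih =>
    set D : ℤ → G := fun s ↦ ψ s - ∑ k ∈ range (N + 1), Ring.choose s k • Δ_[1] ^[k] ψ 0
    have hD : Function.Periodic D 1 := fun s ↦ by
      have hΔ : ψ (s + 1) - ψ s = ∑ k ∈ range N, Ring.choose s k • Δ_[1] ^[k + 1] ψ 0 :=
        ih (ψ := Δ_[1] ψ) hψ s
      simp only [D, sum_range_succ', Ring.choose_succ_succ, Ring.choose_zero_right, add_smul,
        sum_add_distrib]
      rw [← sub_eq_zero, ← sub_eq_zero.mpr hΔ]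
      abel
    have hD0 : D 0 = 0 := by
      simp [D, sum_range_succ', Ring.choose_zero_succ]
    simpa [D, hD0, sub_eq_zero] using hD.int_mul_eq s

lemma Fin.cons_add_eq_add_single_zero {α : Type*} [AddZeroClass α] {t : ℕ} (s a : α)
    (m : Fin t → α) : (Fin.cons (s + a) m : Fin (t + 1) → α) = Fin.cons s m + Pi.single 0 a := by
  ext j; cases j using Fin.cases <;> simp

lemma Fin.cons_add_single_eq_add_single_succ {α : Type*} [AddZeroClass α] {t : ℕ} (s a : α)
    (m : Fin t → α) (i : Fin t) :
    (Fin.cons s (m + Pi.single i a) : Fin (t + 1) → α) = Fin.cons s m + Pi.single i.succ a := by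
  ext j; cases j using Fin.cases <;> simp [Pi.single_apply]

variable {K : Type*} [Field K] [CharZero K]

theorem exists_mvPolynomial_eq_of_fwdDiff_iter_eq_zero :
    ∀ {t : ℕ} (n : Fin t → ℕ) {F : (Fin t → ℤ) → K},
      (∀ i, Δ_[Pi.single i 1] ^[n i] F = 0) →
      ∃ P : MvPolynomial (Fin t) K, ∀ m, F m = MvPolynomial.eval (fun i ↦ (m i : K)) P
  | 0, _, F, _ => ⟨MvPolynomial.C (F 0), fun m ↦ by simp [Subsingleton.elim m 0]⟩
  | t + 1, n, F, hF => by
    set c : ℕ → (Fin t → ℤ) → K := fun k ↦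
      Δ_[Pi.single 0 1] ^[k] F ∘ Fin.cons (α := fun _ ↦ ℤ) 0
    have hc : ∀ k i, Δ_[Pi.single i 1] ^[n i.succ] (c k) = 0 := fun k i ↦ by
      rw [fwdDiff_iter_comp_of_map_add (Fin.cons_add_single_eq_add_single_succ 0 1 · i),
        ← ((fwdDiff_commute_s3 _ _).iterate_iterate _ _).eq, hF, fwdDiff_iter_zero]
      rfl
    choose P hP using fun k ↦ exists_mvPolynomial_eq_of_fwdDiff_iter_eq_zero _ (hc k)
    refine ⟨∑ k ∈ range (n 0),
      Ring.choose (MvPolynomial.X 0) k * MvPolynomial.rename Fin.succ (P k), fun m ↦ ?_⟩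
    have hslice : Δ_[1] ^[n 0] (F ∘ fun s ↦ Fin.cons s (Fin.tail m)) = 0 := by
      rw [fwdDiff_iter_comp_of_map_add (Fin.cons_add_eq_add_single_zero · 1 _), hF]; rfl
    have hNewton := eq_sum_choose_smul_of_fwdDiff_iter_eq_zero hslice (m 0)
    simp only [fwdDiff_iter_comp_of_map_add (u := fun s ↦ Fin.cons s (Fin.tail m))
      (Fin.cons_add_eq_add_single_zero · 1 _), Function.comp_apply,
      Fin.cons_self_tail] at hNewton
    rw [hNewton, map_sum]
    refine sum_congr rfl fun k _ ↦ ?_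
    have hcast : ((Ring.choose (m 0) k : ℤ) : K) = Ring.choose (m 0 : K) k :=
      Ring.map_choose (Int.castRingHom K) _ _
    rw [map_mul, MvPolynomial.eval_rename, Ring.map_choose, MvPolynomial.eval_X, zsmul_eq_mul,
      hcast]
    exact congrArg (_ * ·) (hP k (Fin.tail m))

end Interpolation

namespace MvPolynomial

variable {σ K : Type*}

/-- Quantifying over all multiples `c • u` makes this a submodule without any hypothesis on `K`. -/
def periodSubmodule [CommSemiring K] (P : MvPolynomial σ K) : Submodule K (σ → K) where
  carrier := {u | ∀ (c : K) z, eval (z + c • u) P = eval z P}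
  add_mem' {u v} hu hv c z := by rw [smul_add, ← add_assoc, hv, hu]
  zero_mem' c z := by simp
  smul_mem' d u hu c z := by rw [smul_smul, hu]

theorem intCast_mem_periodSubmodule [CommRing K] [IsDomain K] [CharZero K]
    {P : MvPolynomial σ K} {w : σ → ℤ}
    (hw : Function.Periodic (fun m : σ → ℤ ↦ eval (fun i ↦ (m i : K)) P) w) :
    (fun i ↦ (w i : K)) ∈ P.periodSubmodule := by
  -- the variable `X none` stands for the scalar `c`
  let Q : MvPolynomial (Option σ) K := aeval (fun i ↦ X (some i) + X none * C (w i : K)) P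
  have hQ : ∀ x, eval x Q = eval (fun i ↦ x (some i) + x none * w i) P := fun x ↦ by
    change aeval x (aeval _ P) = aeval _ P
    rw [comp_aeval_apply]
    simp
  have hQP : Q = rename some P := by
    refine funext_set (fun _ ↦ Set.range ((↑) : ℤ → K))
      (fun _ ↦ Set.infinite_range_of_injective Int.cast_injective) fun x hx ↦ ?_
    choose v hv using fun i ↦ hx i trivial
    obtain rfl : (fun i ↦ (v i : K)) = x := _root_.funext hv
    simpa [hQ, eval_rename, Function.comp_def, mul_comm] using (hw.zsmul (v none)) (v ∘ some)
  intro c z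
  have := hQ (fun o ↦ o.elim c z)
  rw [hQP, eval_rename] at this
  exact this.symm

end MvPolynomial

theorem isPolynomialC_of_comp_eq_eval {G : Type*} [AddCommGroup G] {t : ℕ}
    {π : (Fin t → ℤ) →+ G} (hπ : Function.Surjective π) {f : G → ℂ}
    {P : MvPolynomial (Fin t) ℂ} (hf : ∀ m, f (π m) = MvPolynomial.eval (fun i ↦ (m i : ℂ)) P) :
    IsPolynomialC f := by
  let ι : (Fin t → ℤ) →+ (Fin t → ℂ) := (Int.castAddHom ℂ).compLeft (Fin t)
  let W := Submodule.span ℂ (ι '' π.ker)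
  have hW : W ≤ P.periodSubmodule := Submodule.span_le.mpr <| by
    rintro _ ⟨w, hw, rfl⟩
    refine MvPolynomial.intCast_mem_periodSubmodule fun m ↦ ?_
    simp only [← hf, map_add, π.mem_ker.mp hw, add_zero]
  obtain ⟨s, hs⟩ := W.mkQ.exists_rightInverse_of_surjective W.range_mkQ
  let φ : G →+ (Fin t → ℂ) ⧸ W := π.liftOfSurjective hπ
    ⟨W.mkQ.toAddMonoidHom.comp ι, fun w hw ↦
      (Submodule.Quotient.mk_eq_zero W).mpr (Submodule.subset_span (Set.mem_image_of_mem ι hw))⟩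
  refine ⟨t, fun i x ↦ s (φ x) i, P, fun i x y ↦ by simp, fun x ↦ ?_⟩
  obtain ⟨m, rfl⟩ := hπ x
  have hφ : φ (π m) = W.mkQ (ι m) := π.liftOfRightInverse_comp_apply _ _ _ m
  have hm : ι m - s (φ (π m)) ∈ W := by
    rw [← Submodule.Quotient.eq, hφ]
    exact (LinearMap.congr_fun hs (W.mkQ (ι m))).symm
  have hperiod := hW hm 1 (s (φ (π m)))
  rw [one_smul, add_sub_cancel] at hperiod
  exact (hf m).trans hperiod

theorem polynomial_iff_iterated_diff_of_generators {G : Type*} [AddCommGroup G] {t : ℕ}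
    (g : Fin t → G) (hgen : AddSubgroup.closure (Set.range g) = ⊤) (f : G → ℂ) :
    IsPolynomialC f ↔
      ∃ n : Fin t → ℕ, ∀ i : Fin t, ∀ x : G, (fdiff (g i))^[n i + 1] f x = 0 := by
  simp only [fdiff_eq_fwdDiff]
  constructor
  · rintro ⟨n, a, P, ha, hf⟩
    obtain rfl : f = fun x ↦ MvPolynomial.eval (fun j ↦ a j x) P := funext hf
    choose N hN using fun i ↦
      eval_comp_mem_fwdDiffNilpotentSubalgebra (g i) (fun j ↦ AddMonoidHom.mk' (a j) (ha j)) P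
    exact ⟨N, fun i x ↦ congrFun (fwdDiff_iter_eq_zero_of_le (Nat.le_succ _) (hN i)) x⟩
  · rintro ⟨n, hn⟩
    let π := (Fintype.linearCombination ℤ g).toAddMonoidHom
    have hπ : Function.Surjective π := by
      refine (span_range_eq_top_iff_surjective_fintypeLinearCombination ℤ g).mp ?_
      rw [← Submodule.toAddSubgroup_inj, Submodule.span_int_eq_addSubgroupClosure, hgen]
      rfl
    obtain ⟨P, hP⟩ := exists_mvPolynomial_eq_of_fwdDiff_iter_eq_zero (fun i ↦ n i + 1)
      (F := f ∘ π) fun i ↦ by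
        rw [fwdDiff_iter_comp_of_map_add (h' := g i) fun m ↦ by
          simp [π, Fintype.linearCombination_apply_single]]
        ext m; exact hn i (π m)
    exact isPolynomialC_of_comp_eq_eval hπ hP
end

section
/- Let G be a finitely generated abelian group. Then every generalized polynomial f : G → ℂ is a polynomial. -/
/-- The composition `Δ_{y_1} Δ_{y_2} ⋯ Δ_{y_n}` of difference operators. -/
def multiDiff {G M : Type*} [Add G] [Sub M] : (n : ℕ) → (Fin n → G) → (G → M) → (G → M)
  | 0, _, f => f
  | n + 1, y, f => fdiff (y 0) (multiDiff n (fun i => y i.succ) f)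

/-- `f : G → ℂ` is a generalized polynomial of degree at most `n` if
`Δ_{y_1} ⋯ Δ_{y_{n+1}} f = 0` for all `y_1, …, y_{n+1}`. -/
def IsGenPolynomial {G : Type*} [Add G] (f : G → ℂ) : Prop :=
  ∃ n : ℕ, ∀ y : Fin (n + 1) → G, ∀ x : G, multiDiff (n + 1) y f x = 0

/-!
By the structure theorem, `G ≅ ℤ^N × T` with `T` finite. A generalized polynomial is invariant
under translation by a torsion element `s`: by induction on the vanishing order, `Δ_s f` is
`s`-periodic, so `f (x + k • s) - f x = k • Δ_s f x`, and `k • s = 0` forces `Δ_s f = 0`.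
Hence `f` factors through `ℤ^N`. There, Newton's formula
`f (y + t • e) = ∑ k, (t choose k) • Δ_e^k f y`, valid for every integer `t` once `Δ_e^n f = 0`,
writes `f` through generalized polynomials in one variable fewer times binomial polynomials in the
remaining coordinate, and induction on `N` concludes.
-/

open Finset

section Differences

variable {G H M : Type*}

theorem fdiff_comm [AddCommSemigroup G] [AddCommGroup M] (a b : G) (f : G → M) :
    fdiff a (fdiff b f) = fdiff b (fdiff a f) := by
  funext x
  simp only [fdiff, add_right_comm x a b]
  abel

theorem multiDiff_fdiff [AddCommSemigroup G] [AddCommGroup M] (h : G) :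
    ∀ (n : ℕ) (y : Fin n → G) (f : G → M), multiDiff n y (fdiff h f) = fdiff h (multiDiff n y f)
  | 0, _, _ => rfl
  | n + 1, y, f => by
    simp only [multiDiff, multiDiff_fdiff h n, fdiff_comm]

theorem multiDiff_const_eq_iterate [Add G] [Sub M] (h : G) (f : G → M) :
    ∀ n, multiDiff n (fun _ => h) f = (fdiff h)^[n] f
  | 0 => rfl
  | n + 1 => by rw [multiDiff, multiDiff_const_eq_iterate h f n, Function.iterate_succ_apply']

theorem multiDiff_comp_addMonoidHom [AddZeroClass G] [AddZeroClass H] [Sub M] (φ : G →+ H)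
    (f : H → M) : ∀ (n : ℕ) (y : Fin n → G), multiDiff n y (f ∘ φ) = multiDiff n (φ ∘ y) f ∘ φ
  | 0, _ => rfl
  | n + 1, y => by
    funext x
    simp only [multiDiff, fdiff, multiDiff_comp_addMonoidHom φ f n, Function.comp_apply, map_add]
    rfl

theorem add_zsmul_eq_sum_choose_smul_iterate_fdiff [AddCommGroup G] [AddCommGroup M] {h : G}
    {n : ℕ} {f : G → M} (hf : (fdiff h)^[n] f = 0) (y : G) (t : ℤ) :
    f (y + t • h) = ∑ k ∈ range n, Ring.choose t k • (fdiff h)^[k] f y := by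
  induction n generalizing f t with
  | zero => simp [show f = 0 from hf]
  | succ n ih =>
    have ih' := ih (f := fdiff h f) (by rwa [← Function.iterate_succ_apply])
    set D : ℤ → M :=
      fun t => f (y + t • h) - ∑ k ∈ range (n + 1), Ring.choose t k • (fdiff h)^[k] f y
    have hsum : ∀ r : ℤ, ∑ k ∈ range (n + 1), Ring.choose r k • (fdiff h)^[k] f y
        = f y + ∑ k ∈ range n, Ring.choose r (k + 1) • (fdiff h)^[k] (fdiff h f) y := fun r => by
      simp only [sum_range_succ', Ring.choose_zero_right, one_smul, Function.iterate_succ_apply,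
        Function.iterate_zero_apply]
      abel
    have hD : Function.Periodic D 1 := fun s => by
      have hstep : f (y + (s + 1) • h) = f (y + s • h) + fdiff h f (y + s • h) := by
        rw [fdiff, add_zsmul, one_zsmul, ← add_assoc, add_sub_cancel]
      simp only [D]
      rw [hstep, ih', hsum, hsum]
      simp only [Ring.choose_succ_succ, add_smul, sum_add_distrib]
      abel
    have hD0 : D 0 = 0 := by
      simp [D, sum_range_succ', Ring.choose_zero_succ]
    simpa [D, hD0, sub_eq_zero] using hD.int_mul_eq t

theorem fdiff_eq_zero_of_nsmul_eq_zero [AddCommMonoid G] [AddCommGroup M] [IsAddTorsionFree M]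
    {s : G} {k : ℕ} (hk : k ≠ 0) (hs : k • s = 0) {n : ℕ} {f : G → M}
    (hf : (fdiff s)^[n] f = 0) : fdiff s f = 0 := by
  induction n generalizing f with
  | zero =>
    subst hf
    funext x
    simp [fdiff]
  | succ n ih =>
    have hper : Function.Periodic (fdiff s f) s := fun x =>
      sub_eq_zero.1 (congrFun (ih (by rwa [← Function.iterate_succ_apply])) x)
    funext x
    refine nsmul_right_injective hk ?_
    show k • fdiff s f x = k • (0 : G → M) x
    calc k • fdiff s f x = ∑ i ∈ range k, fdiff s f (x + i • s) := by
          simp [hper.nsmul _ x]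
      _ = ∑ i ∈ range k, (f (x + (i + 1) • s) - f (x + i • s)) := by
          simp only [fdiff, succ_nsmul, add_assoc]
      _ = f (x + k • s) - f (x + 0 • s) := sum_range_sub (fun i => f (x + i • s)) k
      _ = k • (0 : G → M) x := by simp [hs]

end Differences

section GenPolynomial

variable {G H : Type*}

theorem IsGenPolynomial.exists_iterate_fdiff_eq_zero [Add G] {f : G → ℂ}
    (hf : IsGenPolynomial f) : ∃ n, ∀ h : G, (fdiff h)^[n] f = 0 := by
  obtain ⟨n, hn⟩ := hf
  exact ⟨n + 1, fun h => funext fun x => by rw [← multiDiff_const_eq_iterate]; exact hn _ x⟩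

theorem IsGenPolynomial.iterate_fdiff [AddCommSemigroup G] {f : G → ℂ} (hf : IsGenPolynomial f)
    (h : G) (k : ℕ) : IsGenPolynomial ((fdiff h)^[k] f) := by
  induction k with
  | zero => exact hf
  | succ k ih =>
    obtain ⟨n, hn⟩ := ih
    refine ⟨n, fun y x => ?_⟩
    rw [Function.iterate_succ_apply', multiDiff_fdiff]
    simp [fdiff, hn]

theorem IsGenPolynomial.comp_addMonoidHom [AddZeroClass G] [AddZeroClass H] {f : H → ℂ}
    (hf : IsGenPolynomial f) (φ : G →+ H) : IsGenPolynomial (f ∘ φ) := by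
  obtain ⟨n, hn⟩ := hf
  exact ⟨n, fun y x => by rw [multiDiff_comp_addMonoidHom]; exact hn _ _⟩

theorem IsGenPolynomial.apply_add_eq_of_isOfFinAddOrder [AddCommMonoid G] {f : G → ℂ}
    (hf : IsGenPolynomial f) {s : G} (hs : IsOfFinAddOrder s) (x : G) : f (x + s) = f x := by
  obtain ⟨n, hn⟩ := hf.exists_iterate_fdiff_eq_zero
  have := fdiff_eq_zero_of_nsmul_eq_zero hs.addOrderOf_pos.ne' (addOrderOf_nsmul_eq_zero s) (hn s)
  exact sub_eq_zero.1 (congrFun this x)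

end GenPolynomial

section PolynomialMaps

variable {G H X : Type*}

/-- The functions `x ↦ P (a₁ x, …, aₙ x)` of `IsPolynomialC`, bundled as the subalgebra generated
by the additive maps, so that closure under sums and products comes for free. -/
def polynomialMaps (G : Type*) [AddZeroClass G] : Subalgebra ℂ (G → ℂ) :=
  Algebra.adjoin ℂ (Set.range ((⇑) : (G →+ ℂ) → G → ℂ))

theorem AddMonoidHom.coe_mem_polynomialMaps [AddZeroClass G] (a : G →+ ℂ) :
    ⇑a ∈ polynomialMaps G :=
  Algebra.subset_adjoin ⟨a, rfl⟩

theorem comp_mem_polynomialMaps [AddZeroClass G] [AddZeroClass H] {p : H → ℂ}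
    (hp : p ∈ polynomialMaps H) (φ : G →+ H) : p ∘ φ ∈ polynomialMaps G := by
  induction hp using Algebra.adjoin_induction with
  | mem p hp =>
    obtain ⟨a, rfl⟩ := hp
    exact (a.comp φ).coe_mem_polynomialMaps
  | algebraMap c => exact Subalgebra.algebraMap_mem _ c
  | add p q _ _ hp hq => exact add_mem hp hq
  | mul p q _ _ hp hq => exact mul_mem hp hq

theorem Ring.choose_eq_inv_factorial_mul_prod {R : Type*} [Field R] [CharZero R] (z : R)
    (k : ℕ) : Ring.choose z k = (k.factorial : R)⁻¹ * ∏ j ∈ range k, (z - j) := by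
  rw [Ring.choose_eq_smul, ← Polynomial.aeval_eq_smeval, Polynomial.aeval_def,
    Polynomial.eval₂_eq_eval_map, descPochhammer_map, descPochhammer_eval_eq_prod_range,
    smul_eq_mul]

theorem Subalgebra.ringChoose_comp_mem {S : Subalgebra ℂ (X → ℂ)} {p : X → ℂ} (hp : p ∈ S)
    (k : ℕ) : (fun x => Ring.choose (p x) k) ∈ S := by
  have : (fun x => Ring.choose (p x) k)
      = algebraMap ℂ (X → ℂ) (k.factorial : ℂ)⁻¹ * ∏ j ∈ range k, (p - algebraMap ℂ _ j) := by
    funext x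
    simp [Ring.choose_eq_inv_factorial_mul_prod, Finset.prod_apply]
  rw [this]
  exact mul_mem (S.algebraMap_mem _) (prod_mem fun j _ => sub_mem hp (S.algebraMap_mem _))

theorem isPolynomialC_of_mem_polynomialMaps [AddZeroClass G] {p : G → ℂ}
    (hp : p ∈ polynomialMaps G) : IsPolynomialC p := by
  rw [polynomialMaps, Algebra.adjoin_range_eq_range_aeval] at hp
  obtain ⟨P, rfl⟩ := hp
  obtain ⟨n, ι, -, q, rfl⟩ := P.exists_fin_rename
  refine ⟨n, fun i => ι i, q, fun i => map_add (ι i), fun x => ?_⟩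
  rw [AlgHom.toRingHom_eq_coe, RingHom.coe_coe, MvPolynomial.aeval_rename,
    ← MvPolynomial.coe_aeval_eq_eval]
  exact MvPolynomial.comp_aeval_apply _ (Pi.evalAlgHom ℂ (fun _ => ℂ) x) q

end PolynomialMaps

section Rigidity

variable {G H T : Type*}

def GenPolynomialsArePolynomial (G : Type*) [AddCommGroup G] : Prop :=
  ∀ f : G → ℂ, IsGenPolynomial f → f ∈ polynomialMaps G

namespace GenPolynomialsArePolynomial

variable [AddCommGroup G] [AddCommGroup H] [AddCommGroup T]

theorem of_subsingleton [Subsingleton G] : GenPolynomialsArePolynomial G := by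
  intro f _
  have : f = algebraMap ℂ (G → ℂ) (f 0) := funext fun x => congrArg f (Subsingleton.elim x 0)
  rw [this]
  exact Subalgebra.algebraMap_mem _ _

theorem of_addEquiv (hH : GenPolynomialsArePolynomial H) (e : G ≃+ H) :
    GenPolynomialsArePolynomial G := by
  intro f hf
  have := comp_mem_polynomialMaps (hH _ (hf.comp_addMonoidHom e.symm.toAddMonoidHom))
    e.toAddMonoidHom
  simpa [Function.comp_def] using this

theorem int_prod (hH : GenPolynomialsArePolynomial H) : GenPolynomialsArePolynomial (ℤ × H) := by
  intro f hf
  obtain ⟨n, hn⟩ := hf.exists_iterate_fdiff_eq_zero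
  have hnewton : f = ∑ k ∈ range n, (fun x : ℤ × H => Ring.choose (x.1 : ℂ) k) *
      ((fdiff ((1 : ℤ), (0 : H)))^[k] f ∘ AddMonoidHom.inr ℤ H) ∘ AddMonoidHom.snd ℤ H := by
    funext x
    have := add_zsmul_eq_sum_choose_smul_iterate_fdiff (hn (1, 0)) (0, x.2) x.1
    have hcast (t : ℤ) (k : ℕ) : ((Ring.choose t k : ℤ) : ℂ) = Ring.choose (t : ℂ) k := by
      simpa using Ring.map_choose (Int.castRingHom ℂ) t k
    simpa [zsmul_eq_mul, Finset.sum_apply, hcast] using this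
  rw [hnewton]
  refine Subalgebra.sum_mem _ fun k _ => Subalgebra.mul_mem _ ?_ ?_
  · exact Subalgebra.ringChoose_comp_mem
      ((Int.castAddHom ℂ).comp (AddMonoidHom.fst ℤ H)).coe_mem_polynomialMaps k
  · exact comp_mem_polynomialMaps (hH _ ((hf.iterate_fdiff _ k).comp_addMonoidHom _))
      (AddMonoidHom.snd ℤ H)

theorem prod_of_isAddTorsion (hH : GenPolynomialsArePolynomial H) (hT : IsAddTorsion T) :
    GenPolynomialsArePolynomial (H × T) := by
  intro f hf
  have : f = (f ∘ AddMonoidHom.inl H T) ∘ AddMonoidHom.fst H T := funext fun x => by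
    simpa using hf.apply_add_eq_of_isOfFinAddOrder (IsOfFinAddOrder.zero.prod_mk (hT x.2)) (x.1, 0)
  rw [this]
  exact comp_mem_polynomialMaps (hH _ (hf.comp_addMonoidHom _)) _

end GenPolynomialsArePolynomial

theorem genPolynomialsArePolynomial_pi_int : ∀ N : ℕ, GenPolynomialsArePolynomial (Fin N → ℤ)
  | 0 => .of_subsingleton
  | N + 1 => (genPolynomialsArePolynomial_pi_int N).int_prod.of_addEquiv
      (Fin.consLinearEquiv ℤ fun _ : Fin (N + 1) => ℤ).toAddEquiv.symm

end Rigidity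

theorem genPolynomial_isPolynomial_of_fg {G : Type*} [AddCommGroup G]
    (hfg : AddGroup.FG G) (f : G → ℂ) (hf : IsGenPolynomial f) :
    IsPolynomialC f := by
  obtain ⟨N, ι, _, p, hp, e, ⟨E⟩⟩ := AddCommGroup.equiv_free_prod_directSum_zmod G
  have : ∀ i, NeZero (p i ^ e i) := fun i => ⟨pow_ne_zero _ (hp i).ne_zero⟩
  have : Finite (DirectSum ι fun i => ZMod (p i ^ e i)) :=
    Finite.of_equiv _ DFinsupp.equivFunOnFintype.symm
  have hG : GenPolynomialsArePolynomial G :=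
    (((genPolynomialsArePolynomial_pi_int N).of_addEquiv
      (Finsupp.linearEquivFunOnFinite ℤ ℤ (Fin N)).toAddEquiv).prod_of_isAddTorsion
      isAddTorsion_of_finite).of_addEquiv E
  exact isPolynomialC_of_mem_polynomialMaps (hG f hf)
end

section
/- Assume that f : ℝ^d → ℝ is continuous and that there is a dense additive subgroup G of ℝ^d and a natural number n such that Δ_h^{n+1} f(x) = 0 for all x, h ∈ G. Then f is an ordinary polynomial. -/
/-!
By continuity, `Δ_h^{n+1} f (x) = 0` extends from the dense subgroup to all `x, h`.
In one variable, the Gregory–Newton formula shows that along every progression `y + k h` the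
function is a polynomial of degree `≤ n` in `k`. The polynomial `q` found on `ℕ` therefore
governs every progression `-M + k / N` too, since that progression meets `ℕ` infinitely often;
so `f = q` on `ℚ`, hence on `ℝ`. In `d + 1` variables, `f` is a polynomial of degree `≤ n` in the
first coordinate and, by induction, an ordinary polynomial on each slice `x₀ = t`; Lagrange
interpolation in `x₀` at `n + 1` nodes glues these slices into a single polynomial.
-/

open Finset Polynomial

section fwdDiff

variable {M G : Type*} [AddCommMonoid M] [AddCommGroup G]

lemma fwdDiff_iter_eq_zero_of_le_s8 {h : M} {f : M → G} {m j : ℕ} (hm : (fwdDiff h)^[m] f = 0)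
    (hj : m ≤ j) : (fwdDiff h)^[j] f = 0 := by
  obtain ⟨k, rfl⟩ := Nat.exists_eq_add_of_le hj
  rw [add_comm, Function.iterate_add_apply, hm]
  exact Function.iterate_fixed (fwdDiff_const h (0 : G)) k

lemma fwdDiff_iter_comp {N : Type*} [AddCommMonoid N] (f : N → G) {e : M → N} {h : M} {H : N}
    (he : ∀ x, e (x + h) = e x + H) (m : ℕ) :
    (fwdDiff h)^[m] (f ∘ e) = (fwdDiff H)^[m] f ∘ e := by
  induction m with
  | zero => rfl
  | succ m ih =>
    funext x
    simp only [Function.iterate_succ_apply', ih, fwdDiff, Function.comp_apply, he]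

lemma fwdDiff_iter_comp_eq_zero {N : Type*} [AddCommMonoid N] {f : N → G} {m : ℕ}
    (hf : ∀ H, (fwdDiff H)^[m] f = 0) {e : M → N} (L : M → N)
    (he : ∀ x h, e (x + h) = e x + L h) (h : M) : (fwdDiff h)^[m] (f ∘ e) = 0 := by
  rw [fwdDiff_iter_comp f (he · h), hf, Pi.zero_comp]

lemma continuous_fwdDiff_iter [TopologicalSpace M] [ContinuousAdd M] [TopologicalSpace G]
    [IsTopologicalAddGroup G] {f : M → G} (hf : Continuous f) (m : ℕ) :
    Continuous fun p : M × M => (fwdDiff p.2)^[m] f p.1 := by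
  induction m with
  | zero => exact hf.comp continuous_fst
  | succ m ih =>
    simp only [Function.iterate_succ_apply', fwdDiff]
    exact (ih.comp (by fun_prop : Continuous fun p : M × M => (p.1 + p.2, p.2))).sub ih

lemma fwdDiff_iter_eq_zero_of_dense [TopologicalSpace M] [ContinuousAdd M] [TopologicalSpace G]
    [IsTopologicalAddGroup G] [T2Space G] {f : M → G} (hf : Continuous f) {s : Set M}
    (hs : Dense s) {m : ℕ} (hzero : ∀ x ∈ s, ∀ h ∈ s, (fwdDiff h)^[m] f x = 0) (h : M) :
    (fwdDiff h)^[m] f = 0 := funext fun x =>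
  congrFun (Continuous.ext_on (hs.prod hs) (continuous_fwdDiff_iter hf m) continuous_const
    fun p hp => hzero p.1 hp.1 p.2 hp.2) (x, h)

theorem exists_polynomial_apply_add_nsmul_eq_eval {K : Type*} [Field K] [CharZero K]
    {f : M → K} {h : M} {n : ℕ} (hf : (fwdDiff h)^[n + 1] f = 0) (y : M) :
    ∃ p : K[X], p.natDegree ≤ n ∧ ∀ k : ℕ, f (y + k • h) = p.eval (k : K) := by
  refine ⟨∑ j ∈ range (n + 1), C ((fwdDiff h)^[j] f y / j.factorial) * descPochhammer K j, ?_,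
    fun k => ?_⟩
  · refine natDegree_sum_le_of_forall_le _ _ fun j hj => (natDegree_C_mul_le _ _).trans ?_
    rw [descPochhammer_natDegree]
    exact Nat.lt_succ_iff.mp (mem_range.mp hj)
  · calc f (y + k • h) = ∑ j ∈ range (k + 1), (k.choose j : K) * (fwdDiff h)^[j] f y := by
          simp only [shift_eq_sum_fwdDiff_iter, nsmul_eq_mul]
      _ = ∑ j ∈ range (k + n + 1), (k.choose j : K) * (fwdDiff h)^[j] f y :=
          sum_subset (range_subset_range.2 (by omega)) fun j _ hj => by
            rw [Nat.choose_eq_zero_of_lt (by simpa using hj), Nat.cast_zero, zero_mul]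
      _ = ∑ j ∈ range (n + 1), (k.choose j : K) * (fwdDiff h)^[j] f y :=
          (sum_subset (range_subset_range.2 (by omega)) fun j _ hj => by
            rw [congrFun (fwdDiff_iter_eq_zero_of_le_s8 hf (by simpa using hj)) y, Pi.zero_apply,
              mul_zero]).symm
      _ = _ := by
          simp only [eval_finsetSum, eval_mul, eval_C, Nat.cast_choose_eq_descPochhammer_div]
          exact sum_congr rfl fun j _ => by ring

end fwdDiff

lemma Rat.exists_eq_natCast_div_sub_natCast (r : ℚ) : ∃ k N M : ℕ, N ≠ 0 ∧ r = k / N - M := by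
  obtain ⟨k, hk⟩ := Int.eq_ofNat_of_zero_le (show 0 ≤ r.num + r.num.natAbs * r.den by
    nlinarith [r.den_pos, neg_le_abs r.num, Int.natCast_natAbs r.num])
  refine ⟨k, r.den, r.num.natAbs, r.den_nz, ?_⟩
  have hk' : (k : ℚ) = r.num + r.num.natAbs * r.den := by
    rw [← Int.cast_natCast k, ← hk]; push_cast [Nat.cast_natAbs]; ring
  rw [hk', add_div, mul_div_cancel_right₀ _ (by exact_mod_cast r.den_nz), Rat.num_div_den]
  ring

theorem eq_eval_natCast_div_sub_natCast {K : Type*} [Field K] [CharZero K] {g : K → K} {n : ℕ}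
    (hg : ∀ h, (fwdDiff h)^[n + 1] g = 0) {q : K[X]} (hq : ∀ k : ℕ, g k = q.eval (k : K))
    (k N M : ℕ) (hN : N ≠ 0) : g (k / N - M) = q.eval ((k : K) / N - M) := by
  obtain ⟨p, -, hp⟩ := exists_polynomial_apply_add_nsmul_eq_eval (hg (1 / N)) (-M : K)
  have hgrid : ∀ k : ℕ, (-M : K) + k • (1 / N : K) = k / N - M := fun k => by
    rw [nsmul_eq_mul]; ring
  -- the progression `-M + k / N` passes through every `j : ℕ`, at `k = (M + j) * N`
  have hagree : ∀ j : ℕ, p.eval (((M + j) * N : ℕ) : K) =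
      (q.comp (C (-M : K) + C (1 / N : K) * X)).eval (((M + j) * N : ℕ) : K) := fun j => by
    have hj : (-M : K) + (((M + j) * N : ℕ) : K) * (1 / N) = j := by
      push_cast; field_simp; ring
    rw [← hp, nsmul_eq_mul, hj, hq]
    simp only [eval_comp, eval_add, eval_mul, eval_C, eval_X]
    rw [mul_comm, hj]
  have hp_eq : p = q.comp (C (-M : K) + C (1 / N : K) * X) := by
    refine eq_of_infinite_eval_eq _ _ (Set.Infinite.mono ?_ (Set.infinite_range_of_injective
      (Nat.cast_injective.comp fun a b hab => by simpa [hN] using hab :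
        Function.Injective fun j : ℕ => (((M + j) * N : ℕ) : K))))
    rintro _ ⟨j, rfl⟩
    exact hagree j
  rw [← hgrid, hp, hp_eq]
  simp only [eval_comp, eval_add, eval_mul, eval_C, eval_X]
  congr 1
  ring

theorem Real.exists_polynomial_of_fwdDiff_iter_eq_zero {g : ℝ → ℝ} (hg : Continuous g) {n : ℕ}
    (hΔ : ∀ h, (fwdDiff h)^[n + 1] g = 0) :
    ∃ q : ℝ[X], q.natDegree ≤ n ∧ ∀ t, g t = q.eval t := by
  obtain ⟨q, hdeg, hq⟩ := exists_polynomial_apply_add_nsmul_eq_eval (hΔ 1) 0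
  refine ⟨q, hdeg, congrFun (Continuous.ext_on Rat.denseRange_cast hg q.continuous ?_)⟩
  rintro _ ⟨r, rfl⟩
  obtain ⟨k, N, M, hN, rfl⟩ := r.exists_eq_natCast_div_sub_natCast
  push_cast
  exact eq_eval_natCast_div_sub_natCast hΔ (fun k => by simpa using hq k) k N M hN

lemma MvPolynomial.eval_aeval_X {R σ : Type*} [CommSemiring R] (x : σ → R) (i : σ) (p : R[X]) :
    eval x (Polynomial.aeval (X i) p) = p.eval (x i) := by
  simpa using (Polynomial.aeval_algHom_apply (aeval x) (X i) p).symm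

theorem exists_mvPolynomial_of_separately_polynomial {K : Type*} [Field K] [Infinite K] {d n : ℕ}
    {f : (Fin (d + 1) → K) → K}
    (hfirst : ∀ y, ∃ q : K[X], q.natDegree ≤ n ∧ ∀ t, f (Matrix.vecCons t y) = q.eval t)
    (hrest : ∀ t, ∃ Q : MvPolynomial (Fin d) K, ∀ y,
      f (Matrix.vecCons t y) = MvPolynomial.eval y Q) :
    ∃ P : MvPolynomial (Fin (d + 1)) K, ∀ x, f x = MvPolynomial.eval x P := by
  classical
  obtain ⟨s, hs⟩ := Infinite.exists_subset_card_eq K (n + 1)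
  choose Q hQ using hrest
  have hinterp : ∀ t y, f (Matrix.vecCons t y) =
      ∑ a ∈ s, f (Matrix.vecCons a y) * (Lagrange.basis s id a).eval t := by
    intro t y
    obtain ⟨q, hdeg, hq⟩ := hfirst y
    have hq_eq := Lagrange.eq_interpolate (s := s) (Set.injOn_id _)
      (degree_le_natDegree.trans_lt (by rw [hs]; exact_mod_cast Nat.lt_succ_of_le hdeg))
    rw [hq, hq_eq, Lagrange.interpolate_apply, eval_finsetSum]
    simp [hq, mul_comm]
  refine ⟨∑ a ∈ s, MvPolynomial.rename Fin.succ (Q a) *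
    Polynomial.aeval (MvPolynomial.X 0) (Lagrange.basis s id a), fun x => ?_⟩
  conv_lhs => rw [← Matrix.cons_head_tail x, hinterp]
  simp only [map_sum, map_mul, MvPolynomial.eval_rename, MvPolynomial.eval_aeval_X, hQ]
  rfl

theorem exists_mvPolynomial_of_fwdDiff_iter_eq_zero {n : ℕ} :
    ∀ {d : ℕ} {f : (Fin d → ℝ) → ℝ}, Continuous f → (∀ h, (fwdDiff h)^[n + 1] f = 0) →
      ∃ P : MvPolynomial (Fin d) ℝ, ∀ x, f x = MvPolynomial.eval x P
  | 0, f, _, _ =>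
    ⟨MvPolynomial.C (f 0), fun x => by rw [Subsingleton.elim x 0, MvPolynomial.eval_C]⟩
  | d + 1, f, hf, hΔ => by
    refine exists_mvPolynomial_of_separately_polynomial (n := n) (fun y => ?_) (fun t => ?_)
    · exact Real.exists_polynomial_of_fwdDiff_iter_eq_zero (g := f ∘ (Matrix.vecCons · y))
        (hf.comp (continuous_id.matrixVecCons continuous_const))
        (fwdDiff_iter_comp_eq_zero hΔ (Matrix.vecCons · 0) fun s h => by simp)
    · exact exists_mvPolynomial_of_fwdDiff_iter_eq_zero (f := f ∘ Matrix.vecCons t)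
        (hf.comp (continuous_const.matrixVecCons continuous_id))
        (fwdDiff_iter_comp_eq_zero hΔ (Matrix.vecCons 0) fun y h => by simp)

theorem polynomial_of_genPolynomial_on_dense_subgroup {d : ℕ}
    (f : (Fin d → ℝ) → ℝ) (hf : Continuous f)
    (G : AddSubgroup (Fin d → ℝ)) (hG : Dense (G : Set (Fin d → ℝ))) (n : ℕ)
    (hdiff : ∀ x ∈ G, ∀ h ∈ G, (fdiff h)^[n + 1] f x = 0) :
    ∃ P : MvPolynomial (Fin d) ℝ, ∀ x, f x = MvPolynomial.eval x P :=
  exists_mvPolynomial_of_fwdDiff_iter_eq_zero hf (fwdDiff_iter_eq_zero_of_dense hf hG hdiff)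
end

section
/- Every continuous local polynomial f : ℝ^d → ℝ is an ordinary polynomial. -/
open MvPolynomial

/-- A complex multivariate polynomial vanishing on a grid `S^d` with `S` infinite is zero. -/
theorem aux_grid : ∀ (d : ℕ) (p : MvPolynomial (Fin d) ℂ) (S : Set ℂ), S.Infinite →
    (∀ x : Fin d → ℂ, (∀ i, x i ∈ S) → MvPolynomial.eval x p = 0) → p = 0 := by
  intro d
  induction d with
  | zero =>
    intro p S hS h
    obtain ⟨c, rfl⟩ := MvPolynomial.C_surjective (Fin 0) p
    have := h (fun i => i.elim0) (fun i => i.elim0)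
    simpa using this
  | succ n ih =>
    intro p S hS h
    have key : ∀ x : Fin n → ℂ, (∀ i, x i ∈ S) →
        Polynomial.map (eval x) (finSuccEquiv ℂ n p) = 0 := by
      intro x hx
      apply Polynomial.eq_zero_of_infinite_isRoot
      apply hS.mono
      intro y hy
      simp only [Set.mem_setOf_eq, Polynomial.IsRoot.def]
      rw [← eval_eq_eval_mv_eval']
      refine h (Fin.cons y x) ?_
      intro i
      refine Fin.cases ?_ ?_ i
      · simpa using hy
      · intro j; simpa using hx j
    have hcoef : ∀ m, (finSuccEquiv ℂ n p).coeff m = 0 := by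
      intro m
      apply ih _ S hS
      intro x hx
      have h2 := congrArg (fun q => Polynomial.coeff q m) (key x hx)
      simpa using h2
    have hz : finSuccEquiv ℂ n p = 0 := Polynomial.ext fun m => by simp [hcoef m]
    exact (map_eq_zero_iff _ (AlgEquiv.injective _)).mp hz

/-- The real-part polynomial of a complex polynomial. -/
noncomputable def rePoly {d : ℕ} (Q : MvPolynomial (Fin d) ℂ) : MvPolynomial (Fin d) ℝ :=
  ∑ m ∈ Q.support, MvPolynomial.monomial m (Q.coeff m).re

theorem eval_rePoly {d : ℕ} (Q : MvPolynomial (Fin d) ℂ) (x : Fin d → ℝ) :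
    MvPolynomial.eval x (rePoly Q) = (MvPolynomial.eval (fun i => (x i : ℂ)) Q).re := by
  conv_rhs => rw [Q.as_sum]
  rw [rePoly, map_sum, map_sum, Complex.re_sum]
  refine Finset.sum_congr rfl fun m _ => ?_
  rw [eval_monomial, eval_monomial]
  have hprod : (∏ i : Fin d, ((x i : ℂ)) ^ m i) = ((∏ i : Fin d, x i ^ m i : ℝ) : ℂ) := by
    push_cast
    rfl
  simp only [Finsupp.prod_pow, hprod, Complex.mul_re, Complex.ofReal_re, Complex.ofReal_im,
    mul_zero, sub_zero]

theorem cont_eval {d : ℕ} (R : MvPolynomial (Fin d) ℝ) :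
    Continuous fun x : Fin d → ℝ => MvPolynomial.eval x R := by
  have : (fun x : Fin d → ℝ => MvPolynomial.eval x R)
      = fun x => ∑ m ∈ R.support, R.coeff m * ∏ i ∈ m.support, x i ^ m i := by
    funext x
    rw [eval_eq]
  rw [this]
  refine continuous_finset_sum _ fun m _ => Continuous.mul continuous_const ?_
  exact continuous_finset_prod _ fun i _ => (continuous_apply i).pow _

theorem eval_bind₁' {σ τ : Type*} (f : τ → ℂ) (g : σ → MvPolynomial τ ℂ)
    (φ : MvPolynomial σ ℂ) :
    eval f (bind₁ g φ) = eval (fun i => eval f (g i)) φ := by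
  simpa using MvPolynomial.eval₂Hom_bind₁ (RingHom.id ℂ) f g φ

/-- On the lattice `c·ℤ^d`, a local polynomial is given by a polynomial in the
integer coordinates. -/
theorem lattice_poly {d : ℕ} (f : (Fin d → ℝ) → ℝ)
    (hloc : ∀ H : AddSubgroup (Fin d → ℝ), H.FG → IsPolynomialC (fun x : H => (f x : ℂ)))
    (c : ℝ) :
    ∃ Q : MvPolynomial (Fin d) ℂ, ∀ m : Fin d → ℤ,
      (f (fun i => c * m i) : ℂ) = MvPolynomial.eval (fun i => (m i : ℂ)) Q := by
  set g : Fin d → (Fin d → ℝ) := fun i => Pi.single i c with hg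
  set H := AddSubgroup.closure (Set.range g) with hH
  have hFG : H.FG := by
    refine ⟨Finset.univ.image g, ?_⟩
    rw [Finset.coe_image, Finset.coe_univ, Set.image_univ]
  obtain ⟨n, a, P, hadd, heval⟩ := hloc H hFG
  set A : Fin n → H →+ ℂ := fun j => AddMonoidHom.mk' (a j) (fun x y => hadd j x y) with hA
  set gH : Fin d → H := fun i => ⟨g i, AddSubgroup.subset_closure (Set.mem_range_self i)⟩ with hgH
  refine ⟨MvPolynomial.bind₁ (fun j => ∑ i, MvPolynomial.C (A j (gH i)) * MvPolynomial.X i) P, ?_⟩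
  intro m
  set xH : H := ∑ i, m i • gH i with hxH
  have hx : (xH : Fin d → ℝ) = fun i => c * m i := by
    funext k
    have : ((xH : Fin d → ℝ)) = ∑ i, m i • (g i) := by
      rw [hxH]
      push_cast
      rfl
    rw [this]
    simp [Finset.sum_apply, Pi.single_apply, g]
    simp [Finset.sum_ite_eq, mul_comm]
  have h1 : (f (fun i => c * m i) : ℂ) = eval (fun j => a j xH) P := by
    rw [← hx]; exact heval xH
  rw [h1, eval_bind₁']
  have hFG2 : (fun j => a j xH)
      = fun j => (eval fun i => (m i : ℂ)) (∑ i, C (A j (gH i)) * X i) := by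
    funext j
    have h2 : a j xH = A j xH := rfl
    rw [h2, hxH, map_sum]
    rw [map_sum (eval fun i => (m i : ℂ))]
    refine Finset.sum_congr rfl fun i _ => ?_
    rw [map_zsmul]
    simp [zsmul_eq_mul, mul_comm]
  rw [hFG2]

/-- On the lattice `(1/(k+1))·ℤ^d`, `f` agrees with a complex polynomial in the
real coordinates. -/
theorem lattice_poly2 {d : ℕ} (f : (Fin d → ℝ) → ℝ)
    (hloc : ∀ H : AddSubgroup (Fin d → ℝ), H.FG → IsPolynomialC (fun x : H => (f x : ℂ)))
    (k : ℕ) :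
    ∃ S : MvPolynomial (Fin d) ℂ, ∀ x : Fin d → ℝ,
      (∀ i, ∃ m : ℤ, ((k : ℝ) + 1) * x i = m) →
        (f x : ℂ) = MvPolynomial.eval (fun i => (x i : ℂ)) S := by
  obtain ⟨Q, hQ⟩ := lattice_poly f hloc (((k : ℝ) + 1)⁻¹)
  refine ⟨bind₁ (fun i => C ((k : ℂ) + 1) * X i) Q, ?_⟩
  intro x hx
  choose m hm using hx
  have hk0 : ((k : ℝ) + 1) ≠ 0 := by positivity
  have hx2 : x = fun i => ((k : ℝ) + 1)⁻¹ * m i := by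
    funext i
    rw [← hm i]
    field_simp
  rw [eval_bind₁']
  have hsub : (fun i => (eval fun j => (x j : ℂ)) (C ((k : ℂ) + 1) * X i))
      = fun i => (m i : ℂ) := by
    funext i
    simp only [map_mul, eval_C, eval_X]
    have := congrArg (Complex.ofReal) (hm i)
    push_cast at this ⊢
    linear_combination this
  rw [hsub, ← hQ m, hx2]

theorem continuous_local_polynomial_is_polynomial {d : ℕ}
    (f : (Fin d → ℝ) → ℝ) (hf : Continuous f)
    (hloc : ∀ H : AddSubgroup (Fin d → ℝ), H.FG →
      IsPolynomialC (fun x : H => (f x : ℂ))) :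
    ∃ P : MvPolynomial (Fin d) ℝ, ∀ x, f x = MvPolynomial.eval x P := by
  choose S hS using fun k => lattice_poly2 f hloc k
  -- all the lattice polynomials coincide (they agree on ℤ^d, which is Zariski dense)
  have hSeq : ∀ k, S k = S 0 := by
    intro k
    have hzero : S k - S 0 = 0 := by
      apply aux_grid d _ (Set.range (Int.cast : ℤ → ℂ))
      · exact Set.infinite_range_of_injective Int.cast_injective
      · intro x hx
        choose m hm using hx
        have hx' : x = fun i => (((m i : ℝ) : ℂ)) := by
          funext i
          rw [← hm i]
          push_cast
          rfl
        rw [map_sub, hx']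
        have e1 := hS k (fun i => (m i : ℝ)) (fun i => ⟨(k + 1) * m i, by push_cast; ring⟩)
        have e0 := hS 0 (fun i => (m i : ℝ)) (fun i => ⟨m i, by push_cast; ring⟩)
        rw [← e1, ← e0, sub_self]
    exact sub_eq_zero.mp hzero
  set R := rePoly (S 0) with hR
  refine ⟨R, ?_⟩
  set D : Set (Fin d → ℝ) := {x | ∃ k : ℕ, ∀ i, ∃ m : ℤ, ((k : ℝ) + 1) * x i = m} with hD
  have heqOn : Set.EqOn f (fun x => MvPolynomial.eval x R) D := by
    intro x hx
    obtain ⟨k, hk⟩ := hx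
    have h1 := hS k x hk
    rw [hSeq k] at h1
    have h2 : MvPolynomial.eval x R = ((f x : ℂ)).re := by
      rw [hR, eval_rePoly, ← h1]
    simpa using h2.symm
  have hdense : Dense D := by
    intro x
    have htend : Filter.Tendsto
        (fun k : ℕ => fun i => (⌊((k : ℝ) + 1) * x i⌋ : ℝ) / ((k : ℝ) + 1))
        Filter.atTop (nhds x) := by
      rw [tendsto_pi_nhds]
      intro i
      have hpos : ∀ k : ℕ, (0 : ℝ) < (k : ℝ) + 1 := fun k => by positivity
      have hup : ∀ k : ℕ, (⌊((k : ℝ) + 1) * x i⌋ : ℝ) / ((k : ℝ) + 1) ≤ x i := by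
        intro k
        rw [div_le_iff₀ (hpos k)]
        have := Int.floor_le (((k : ℝ) + 1) * x i)
        linarith
      have hlow : ∀ k : ℕ, x i - 1 / ((k : ℝ) + 1)
          ≤ (⌊((k : ℝ) + 1) * x i⌋ : ℝ) / ((k : ℝ) + 1) := by
        intro k
        rw [le_div_iff₀ (hpos k)]
        have h3 := Int.sub_one_lt_floor (((k : ℝ) + 1) * x i)
        have h4 : (x i - 1 / ((k : ℝ) + 1)) * ((k : ℝ) + 1) = ((k : ℝ) + 1) * x i - 1 := by
          field_simp
        linarith
      refine tendsto_of_tendsto_of_tendsto_of_le_of_le ?_ tendsto_const_nhds hlow hup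
      have h5 : Filter.Tendsto (fun k : ℕ => x i - 1 / ((k : ℝ) + 1)) Filter.atTop
          (nhds (x i - 0)) :=
        Filter.Tendsto.sub tendsto_const_nhds tendsto_one_div_add_atTop_nhds_zero_nat
      simpa using h5
    refine mem_closure_of_tendsto htend ?_
    filter_upwards with k
    refine ⟨k, fun i => ⟨⌊((k : ℝ) + 1) * x i⌋, ?_⟩⟩
    have : ((k : ℝ) + 1) ≠ 0 := by positivity
    field_simp
  have hfin := Continuous.ext_on hdense hf (cont_eval R) heqOn
  exact fun x => congrFun hfin x
end

section
/- Let f : ℝ^d → ℝ be continuous and let N be a natural number such that Δ_h^{N+1} f(x) = 0 for all x, h ∈ ℝ^d. Then f is an ordinary polynomial of total degree at most N. -/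
/-!
On each line, `f` restricts to a continuous function `g` of one variable whose `(N + 1)`-st
differences vanish for every step. Subtracting the Lagrange interpolant at `0, …, N`, we may
assume that `g` vanishes there. The interpolant `q` of `g` at the half-step nodes `i / 2`
agrees with `g` on `ℕ / 2` by the Gregory–Newton formula, so it vanishes at `0, …, N` and is
zero; thus `g` vanishes at `i / 2` for `i ≤ N`. Iterating, `g` vanishes at `i / 2 ^ k`, then by
Gregory–Newton forwards and backwards on `ℤ / 2 ^ k`, and by continuity everywhere.

In several variables, interpolating in the last coordinate, with coefficients that are
polynomials by induction on `d`, writes `f` as a polynomial `P`. The homogeneous component of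
`P` of degree `m`, evaluated at `v`, is the `t ^ m`-coefficient of `t ↦ f (t • v)`, a polynomial
of degree at most `N`; so the components of degree `m > N` vanish.
-/

open Finset Function Polynomial

section FwdDiff

variable {M G : Type*} [AddCommMonoid M] [AddCommGroup G]

lemma fwdDiff_iter_sub (h : M) (f g : M → G) (n : ℕ) :
    (fwdDiff h)^[n] (f - g) = (fwdDiff h)^[n] f - (fwdDiff h)^[n] g := by
  simpa only [fwdDiff_aux.coe_fwdDiffₗ_pow] using map_sub (fwdDiff_aux.fwdDiffₗ M G h ^ n) f g

lemma fwdDiff_iter_comp_of_map_add_s14 {A : Type*} [AddCommMonoid A] {e : A → M} {a : A} {h : M}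
    (he : ∀ x, e (x + a) = e x + h) (f : M → G) (n : ℕ) :
    (fwdDiff a)^[n] (f ∘ e) = (fwdDiff h)^[n] f ∘ e := by
  induction n generalizing f with
  | zero => rfl
  | succ n ih =>
    have hcomp : fwdDiff a (f ∘ e) = fwdDiff h f ∘ e :=
      funext fun x => by simp only [fwdDiff, comp_apply, he]
    rw [iterate_succ_apply, iterate_succ_apply, hcomp, ih]

theorem apply_add_nsmul_eq_zero_of_fwdDiff_iter {g : M → G} {h x : M} {N : ℕ}
    (hΔ : ∀ y, (fwdDiff h)^[N + 1] g y = 0) (hg : ∀ i ≤ N, g (x + i • h) = 0) (n : ℕ) :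
    g (x + n • h) = 0 := by
  have hdiff : ∀ k, (fwdDiff h)^[k] g x = 0 := by
    intro k
    rcases le_or_gt k N with hk | hk
    · rw [fwdDiff_iter_eq_sum_shift]
      exact sum_eq_zero fun i hi => by rw [hg i (by grind), smul_zero]
    · obtain ⟨j, rfl⟩ := Nat.exists_eq_add_of_lt hk
      rw [show N + j + 1 = j + (N + 1) by omega, iterate_add_apply, funext hΔ,
        iterate_fixed (fwdDiff_const h 0)]
  rw [shift_eq_sum_fwdDiff_iter h g n x]
  exact sum_eq_zero fun k _ => by rw [hdiff, smul_zero]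

end FwdDiff

theorem apply_add_zsmul_eq_zero_of_fwdDiff_iter {M G : Type*} [AddCommGroup M]
    [AddCommGroup G] {g : M → G} {h x : M} {N : ℕ} (hΔ : ∀ y, (fwdDiff h)^[N + 1] g y = 0)
    (hΔneg : ∀ y, (fwdDiff (-h))^[N + 1] g y = 0) (hg : ∀ i ≤ N, g (x + i • h) = 0)
    (m : ℤ) :
    g (x + m • h) = 0 := by
  have hback : ∀ i ≤ N, g (x + N • h + i • -h) = 0 := by
    intro i hi
    obtain ⟨j, rfl⟩ := Nat.exists_eq_add_of_le hi
    convert hg j (by omega) using 2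
    rw [add_nsmul, smul_neg]
    abel
  rcases m with n | n
  · simpa using apply_add_nsmul_eq_zero_of_fwdDiff_iter hΔ hg n
  · convert apply_add_nsmul_eq_zero_of_fwdDiff_iter hΔneg hback (N + (n + 1)) using 2
    simp only [negSucc_zsmul, smul_neg, add_nsmul]
    abel

def IsGeneralizedPolynomial {M G : Type*} [AddCommMonoid M] [AddCommGroup G] (N : ℕ)
    (f : M → G) : Prop :=
  ∀ h x, (fwdDiff h)^[N + 1] f x = 0

namespace IsGeneralizedPolynomial

variable {M G : Type*} [AddCommMonoid M] [AddCommGroup G] {N : ℕ} {f g : M → G}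

lemma sub (hf : IsGeneralizedPolynomial N f) (hg : IsGeneralizedPolynomial N g) :
    IsGeneralizedPolynomial N (f - g) := fun h x => by
  rw [fwdDiff_iter_sub, Pi.sub_apply, hf, hg, sub_zero]

lemma comp {A : Type*} [AddCommMonoid A] (hf : IsGeneralizedPolynomial N f) {e : A → M}
    (he : ∀ a, ∃ h, ∀ x, e (x + a) = e x + h) : IsGeneralizedPolynomial N (f ∘ e) := by
  intro a x
  obtain ⟨h, heh⟩ := he a
  rw [fwdDiff_iter_comp_of_map_add_s14 heh, comp_apply, hf]

end IsGeneralizedPolynomial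

/-- Reduces to the case of step `1` by composing `p` with the affine map `t ↦ h * t + x`. -/
lemma Polynomial.isGeneralizedPolynomial_eval {R : Type*} [CommRing R] {p : R[X]} {N : ℕ}
    (hp : p.natDegree ≤ N) : IsGeneralizedPolynomial N p.eval := fun h x => by
  set q : R[X] := C h * X + C x
  have hq : ∀ a, q.eval (a + 1) = q.eval a + h := fun a => by
    simp only [q, eval_add, eval_mul, eval_C, eval_X]
    ring
  have hdeg : (p.comp q).natDegree < N + 1 := by
    have := natDegree_comp_le (p := p) (q := q)
    have := natDegree_linear_le (a := h) (b := x)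
    nlinarith
  have key := fwdDiff_iter_comp_of_map_add_s14 (e := q.eval) hq p.eval (N + 1)
  have hpq : (p.comp q).eval = p.eval ∘ q.eval := by ext a; exact eval_comp
  rw [← hpq, fwdDiff_iter_eq_zero_of_degree_lt hdeg] at key
  have hq0 : q.eval 0 = x := by simp [q]
  simpa only [comp_apply, hq0, Pi.zero_apply] using (congr_fun key 0).symm

lemma nsmul_left_injective_of_ne_zero {K : Type*} [Field K] [CharZero K] {s : K} (hs : s ≠ 0) :
    Injective fun i : ℕ => i • s := fun i j hij => by
  simpa [nsmul_eq_mul, hs] using hij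

theorem IsGeneralizedPolynomial.apply_nsmul_half_eq_zero {K : Type*} [Field K] [CharZero K]
    {g : K → K} {N : ℕ} (hg : IsGeneralizedPolynomial N g) {s : K} (hs : s ≠ 0)
    (h0 : ∀ i ≤ N, g (i • s) = 0) : ∀ i ≤ N, g (i • (s / 2)) = 0 := by
  have hinj := (nsmul_left_injective_of_ne_zero (div_ne_zero hs two_ne_zero)).injOn
    (s := range (N + 1))
  obtain ⟨q, hq_def⟩ : ∃ q, q = Lagrange.interpolate (range (N + 1))
      (fun i : ℕ => i • (s / 2)) fun i => g (i • (s / 2)) := ⟨_, rfl⟩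
  have hqdeg : q.degree < (N + 1 : ℕ) := by
    have := Lagrange.degree_interpolate_lt (fun i => g (i • (s / 2))) hinj
    rwa [card_range, ← hq_def] at this
  have hgq : ∀ n : ℕ, g (n • (s / 2)) = q.eval (n • (s / 2)) := by
    have hq : IsGeneralizedPolynomial N q.eval :=
      isGeneralizedPolynomial_eval (natDegree_le_iff_degree_le.2 (Order.le_of_lt_succ hqdeg))
    intro n
    simpa only [zero_add, Pi.sub_apply, sub_eq_zero] using
      apply_add_nsmul_eq_zero_of_fwdDiff_iter (x := 0) (hg.sub hq (s / 2)) (fun i hi => by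
        rw [zero_add, Pi.sub_apply, hq_def,
          Lagrange.eval_interpolate_at_node _ hinj (mem_range.2 (Nat.lt_succ_of_le hi)),
          sub_self]) n
  have hq : q = 0 := by
    refine eq_zero_of_degree_lt_of_eval_index_eq_zero (range (N + 1))
      (nsmul_left_injective_of_ne_zero hs).injOn (by simpa using hqdeg) fun i hi => ?_
    rw [← h0 i (Nat.le_of_lt_succ (mem_range.1 hi)), show i • s = (2 * i) • (s / 2) by
      rw [mul_comm, mul_nsmul, two_nsmul, ← smul_add, add_halves], hgq]
  intro i _
  rw [hgq, hq, eval_zero]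

open Filter Topology in
theorem tendsto_intFloor_mul_two_pow_div (t : ℝ) :
    Tendsto (fun k : ℕ => ⌊t * 2 ^ k⌋ / (2 : ℝ) ^ k) atTop (𝓝 t) := by
  have hlower : Tendsto (fun k : ℕ => t - 1 / (2 : ℝ) ^ k) atTop (𝓝 t) := by
    simpa using tendsto_const_nhds.sub (tendsto_inv_atTop_zero.comp
      (tendsto_pow_atTop_atTop_of_one_lt (one_lt_two : (1 : ℝ) < 2)))
  refine tendsto_of_tendsto_of_tendsto_of_le_of_le hlower tendsto_const_nhds (fun k => ?_)
    (fun k => ?_)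
  · rw [sub_le_iff_le_add, ← add_div, le_div_iff₀ (by positivity)]
    exact (Int.lt_floor_add_one _).le
  · rw [div_le_iff₀ (by positivity)]
    exact Int.floor_le _

open Filter in
theorem IsGeneralizedPolynomial.eq_zero_of_apply_natCast_eq_zero {g : ℝ → ℝ} {N : ℕ}
    (hg : IsGeneralizedPolynomial N g) (hc : Continuous g) (h0 : ∀ i ≤ N, g i = 0) : g = 0 := by
  have hdyadic : ∀ k : ℕ, ∀ i ≤ N, g (i • (1 / 2 ^ k)) = 0 := by
    intro k
    induction k with
    | zero => simpa using h0
    | succ k ih =>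
      rw [pow_succ, ← div_div]
      exact hg.apply_nsmul_half_eq_zero (by positivity) ih
  have hgrid : ∀ (k : ℕ) (m : ℤ), g (m / 2 ^ k) = 0 := fun k m => by
    simpa [zsmul_eq_mul, div_eq_mul_inv] using apply_add_zsmul_eq_zero_of_fwdDiff_iter (x := 0)
      (hg _) (hg _) (by simpa using hdyadic k) m
  funext t
  exact (isClosed_eq hc continuous_const).mem_of_tendsto (tendsto_intFloor_mul_two_pow_div t)
    (Eventually.of_forall fun k => hgrid k _)

theorem IsGeneralizedPolynomial.exists_polynomial {φ : ℝ → ℝ} {N : ℕ}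
    (hφ : IsGeneralizedPolynomial N φ) (hc : Continuous φ) :
    ∃ p : ℝ[X], p.natDegree ≤ N ∧ φ = p.eval := by
  have hinj : Set.InjOn (fun i : ℕ => (i : ℝ)) (range (N + 1)) := Nat.cast_injective.injOn
  set p := Lagrange.interpolate (range (N + 1)) (fun i : ℕ => (i : ℝ)) fun i : ℕ => φ i
  have hdeg : p.natDegree ≤ N := by
    have := Lagrange.degree_interpolate_lt (fun i : ℕ => φ i) hinj
    rw [card_range] at this
    exact natDegree_le_iff_degree_le.2 (Order.le_of_lt_succ this)
  refine ⟨p, hdeg, sub_eq_zero.1 ?_⟩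
  refine (hφ.sub (isGeneralizedPolynomial_eval hdeg)).eq_zero_of_apply_natCast_eq_zero
    (hc.sub p.continuous) fun i hi => ?_
  rw [Pi.sub_apply,
    Lagrange.eval_interpolate_at_node _ hinj (mem_range.2 (Nat.lt_succ_of_le hi)), sub_self]

lemma Polynomial.eval_eq_sum_lagrangeBasis_natCast {K : Type*} [Field K] [CharZero K]
    {p : K[X]} {N : ℕ} (hp : p.natDegree ≤ N) (t : K) :
    p.eval t = ∑ j ∈ range (N + 1),
      p.eval (j : K) * (Lagrange.basis (range (N + 1)) (fun i : ℕ => (i : K)) j).eval t := by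
  have hinj : Set.InjOn (fun i : ℕ => (i : K)) (range (N + 1)) := Nat.cast_injective.injOn
  have hdeg : p.degree < #(range (N + 1)) := by
    rw [card_range]
    exact (degree_le_of_natDegree_le hp).trans_lt (by exact_mod_cast Nat.lt_succ_self N)
  conv_lhs => rw [Lagrange.eq_interpolate hinj hdeg, Lagrange.interpolate_apply]
  simp only [eval_finsetSum, eval_mul, eval_C]

lemma MvPolynomial.eval_aeval_X_s14 {σ R : Type*} [CommRing R] (y : σ → R) (i : σ) (b : R[X]) :
    eval y (Polynomial.aeval (X i : MvPolynomial σ R) b) = b.eval (y i) := by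
  rw [Polynomial.aeval_def, Polynomial.hom_eval₂, algebraMap_eq, eval_X,
    show (eval y).comp C = RingHom.id R from eval₂Hom_comp_C _ _, Polynomial.eval₂_id]

theorem IsGeneralizedPolynomial.exists_mvPolynomial {N d : ℕ} {f : (Fin d → ℝ) → ℝ}
    (hf : IsGeneralizedPolynomial N f) (hc : Continuous f) :
    ∃ P : MvPolynomial (Fin d) ℝ, ∀ x, f x = MvPolynomial.eval x P := by
  induction d with
  | zero =>
    exact ⟨MvPolynomial.C (f 0), fun x => by rw [MvPolynomial.eval_C, Subsingleton.elim x 0]⟩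
  | succ d ih =>
    have hsection : ∀ c : ℝ, ∃ P : MvPolynomial (Fin d) ℝ,
        ∀ x, f (Fin.snoc x c) = MvPolynomial.eval x P :=
      fun c => ih (hf.comp fun a => ⟨Fin.snoc a 0, fun x => by
        ext i; cases i using Fin.lastCases <;> simp⟩) (by fun_prop)
    choose P hP using hsection
    have hfiber : ∀ x s, f (Fin.snoc x s) = ∑ j ∈ range (N + 1), f (Fin.snoc x (j : ℝ)) *
        (Lagrange.basis (range (N + 1)) (fun i : ℕ => (i : ℝ)) j).eval s := by
      intro x s
      obtain ⟨p, hp, hfp⟩ := (hf.comp (e := Fin.snoc x) fun a => ⟨Fin.snoc 0 a, fun x => by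
        ext i; cases i using Fin.lastCases <;> simp⟩).exists_polynomial (by fun_prop)
      simp only [funext_iff, comp_apply] at hfp
      rw [hfp, eval_eq_sum_lagrangeBasis_natCast hp]
      simp only [hfp]
    refine ⟨∑ j ∈ range (N + 1), MvPolynomial.rename Fin.castSucc (P j) *
      aeval (MvPolynomial.X (Fin.last d))
        (Lagrange.basis (range (N + 1)) (fun i : ℕ => (i : ℝ)) j), fun y => ?_⟩
    simp only [map_sum, map_mul, MvPolynomial.eval_rename, MvPolynomial.eval_aeval_X_s14, ← hP]
    conv_lhs => rw [← Fin.snoc_init_self y, hfiber]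
    rfl

namespace MvPolynomial

variable {σ R : Type*} [CommSemiring R]

lemma totalDegree_le_of_homogeneousComponent_eq_zero {P : MvPolynomial σ R} {N : ℕ}
    (h : ∀ m, N < m → homogeneousComponent m P = 0) : P.totalDegree ≤ N := by
  rw [← sum_homogeneousComponent P]
  refine (totalDegree_finsetSum _ _).trans (Finset.sup_le fun m _ => ?_)
  rcases le_or_gt m N with hm | hm
  · exact (homogeneousComponent_isHomogeneous m P).totalDegree_le.trans hm
  · simp [h m hm]

lemma IsHomogeneous.eval_smul {P : MvPolynomial σ R} {n : ℕ} (hP : P.IsHomogeneous n) (r : R)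
    (x : σ → R) : eval (r • x) P = r ^ n * eval x P := by
  rw [eval_eq, eval_eq, Finset.mul_sum]
  refine Finset.sum_congr rfl fun s hs => ?_
  have hdeg : ∑ i ∈ s.support, s i = n := by
    simpa [Finsupp.weight_apply, Finsupp.sum] using hP (mem_support_iff.1 hs)
  simp only [Pi.smul_apply, smul_eq_mul, mul_pow, Finset.prod_mul_distrib,
    Finset.prod_pow_eq_pow_sum, hdeg]
  ring

noncomputable def restrictLine (P : MvPolynomial σ R) (v : σ → R) : R[X] :=
  ∑ m ∈ range (P.totalDegree + 1),
    Polynomial.C (eval v (homogeneousComponent m P)) * Polynomial.X ^ m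

lemma eval_restrictLine (P : MvPolynomial σ R) (v : σ → R) (t : R) :
    (P.restrictLine v).eval t = eval (t • v) P := by
  conv_rhs => rw [← sum_homogeneousComponent P]
  simp only [restrictLine, Polynomial.eval_finsetSum, map_sum, Polynomial.eval_mul,
    Polynomial.eval_C, Polynomial.eval_pow, Polynomial.eval_X,
    (homogeneousComponent_isHomogeneous _ P).eval_smul, mul_comm]

lemma coeff_restrictLine (P : MvPolynomial σ R) (v : σ → R) (m : ℕ) :
    (P.restrictLine v).coeff m = eval v (homogeneousComponent m P) := by
  simp only [restrictLine, Polynomial.finsetSum_coeff, Polynomial.coeff_C_mul_X_pow,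
    sum_ite_eq, mem_range]
  split_ifs with hm
  · rfl
  · rw [homogeneousComponent_eq_zero _ _ (by omega), map_zero]

theorem totalDegree_le_of_forall_eval_smul_eq_eval {K : Type*} [CommRing K] [IsDomain K]
    [Infinite K] {P : MvPolynomial σ K} {N : ℕ}
    (h : ∀ v : σ → K, ∃ q : K[X], q.natDegree ≤ N ∧ ∀ t, eval (t • v) P = q.eval t) :
    P.totalDegree ≤ N := by
  refine totalDegree_le_of_homogeneousComponent_eq_zero fun m hm => funext fun v => ?_
  obtain ⟨q, hq, hPq⟩ := h v
  have hline : P.restrictLine v = q := Polynomial.funext fun t => by rw [eval_restrictLine, hPq]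
  rw [map_zero, ← coeff_restrictLine, hline, coeff_eq_zero_of_natDegree_lt (hq.trans_lt hm)]

end MvPolynomial

theorem continuous_genPolynomial_is_polynomial {d : ℕ}
    (f : (Fin d → ℝ) → ℝ) (hf : Continuous f) (N : ℕ)
    (hdiff : ∀ x h : Fin d → ℝ, (fdiff h)^[N + 1] f x = 0) :
    ∃ P : MvPolynomial (Fin d) ℝ,
      P.totalDegree ≤ N ∧ ∀ x, f x = MvPolynomial.eval x P := by
  have hgen : IsGeneralizedPolynomial N f := fun h x => hdiff x h
  obtain ⟨P, hP⟩ := hgen.exists_mvPolynomial hf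
  refine ⟨P, MvPolynomial.totalDegree_le_of_forall_eval_smul_eq_eval fun v => ?_, hP⟩
  have hline : IsGeneralizedPolynomial N fun t : ℝ => f (t • v) :=
    hgen.comp fun a => ⟨a • v, fun t => add_smul t a v⟩
  obtain ⟨q, hq, hfq⟩ := hline.exists_polynomial (by fun_prop)
  exact ⟨q, hq, fun t => by rw [← hP, ← congr_fun hfq t]⟩
end

section
/- Let M be a commutative monoid generated (as a monoid) by elements g_1, g_2, …, g_t, let f : M → ℂ, and let n_1, …, n_t be natural numbers such that Δ_{g_i}^{n_i+1} f(x) = 0 for all x ∈ M and all i = 1, …, t. Set N = n_1 + n_2 + ⋯ + n_t + t − 1. Then Δ_y^{N+1} f(x) = 0 for all x, y ∈ M. -/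
open Finset AddMonoidAlgebra fwdDiff_aux

namespace AddMonoidAlgebra

variable {M : Type*} [AddCommMonoid M]

noncomputable def fwdDiffElt (a : M) : AddMonoidAlgebra ℤ M := of' ℤ M a - 1

lemma fwdDiffElt_zero : fwdDiffElt (0 : M) = 0 := by
  simp [fwdDiffElt, one_def]

lemma fwdDiffElt_add (a b : M) :
    fwdDiffElt (a + b) = fwdDiffElt a * of' ℤ M b + fwdDiffElt b := by
  have hof : of' ℤ M (a + b) = of' ℤ M a * of' ℤ M b := by
    simp only [of'_apply, single_mul_single, one_mul]
  rw [fwdDiffElt, fwdDiffElt, fwdDiffElt, hof]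
  ring

lemma fwdDiffElt_nsmul (c : ℕ) (a : M) :
    fwdDiffElt (c • a) = (∑ i ∈ range c, of' ℤ M a ^ i) * fwdDiffElt a := by
  rw [fwdDiffElt, fwdDiffElt, geom_sum_mul, of'_apply, of'_apply, single_pow, one_pow]

variable {I : Ideal (AddMonoidAlgebra ℤ M)}

lemma fwdDiffElt_nsmul_pow_mem {a : M} {p : ℕ} (h : fwdDiffElt a ^ p ∈ I) (c : ℕ) :
    fwdDiffElt (c • a) ^ p ∈ I := by
  rw [fwdDiffElt_nsmul, mul_pow]
  exact I.mul_mem_left _ h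

lemma fwdDiffElt_add_pow_mem {a b : M} {p q : ℕ} (ha : fwdDiffElt a ^ (p + 1) ∈ I)
    (hb : fwdDiffElt b ^ (q + 1) ∈ I) : fwdDiffElt (a + b) ^ (p + q + 1) ∈ I := by
  rw [fwdDiffElt_add]
  refine I.add_pow_mem_of_pow_mem_of_le (m := p + 1) ?_ hb (by omega)
  rw [mul_pow]
  exact I.mul_mem_right _ ha

lemma fwdDiffElt_sum_pow_mem {ι : Type*} (s : Finset ι) {a : ι → M} {p : ι → ℕ}
    (h : ∀ i ∈ s, fwdDiffElt (a i) ^ (p i + 1) ∈ I) :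
    fwdDiffElt (∑ i ∈ s, a i) ^ ((∑ i ∈ s, p i) + 1) ∈ I := by
  induction s using Finset.cons_induction with
  | empty => simp [fwdDiffElt_zero]
  | cons j s hj ih =>
    rw [sum_cons, sum_cons, add_assoc]
    exact fwdDiffElt_add_pow_mem (h j (mem_cons_self j s))
      (ih fun i hi ↦ h i (mem_cons_of_mem hi))

end AddMonoidAlgebra

section ShiftAction

variable {M G : Type*} [AddCommMonoid M] [AddCommGroup G]

lemma shiftₗ_add (a b : M) : shiftₗ M G (a + b) = shiftₗ M G a * shiftₗ M G b := by
  ext f y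
  simp [shiftₗ_apply, add_assoc]

variable (M G) in
noncomputable def shiftHom : Multiplicative M →* Module.End ℤ (M → G) where
  toFun a := shiftₗ M G a.toAdd
  map_one' := by ext; simp [shiftₗ_apply]
  map_mul' a b := shiftₗ_add a.toAdd b.toAdd

variable (M G) in
noncomputable def shiftAlgHom : AddMonoidAlgebra ℤ M →ₐ[ℤ] Module.End ℤ (M → G) :=
  lift ℤ _ M (shiftHom M G)

lemma shiftAlgHom_fwdDiffElt (a : M) : shiftAlgHom M G (fwdDiffElt a) = fwdDiffₗ M G a := by
  rw [fwdDiffElt, map_sub, map_one, shiftAlgHom, lift_of']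
  exact add_sub_cancel_right _ _

noncomputable def shiftAnnihilator (f : M → G) : Ideal (AddMonoidAlgebra ℤ M) where
  carrier := {r | shiftAlgHom M G r f = 0}
  add_mem' hr hs := by simp_all
  zero_mem' := by simp
  smul_mem' r s hs := by simp_all [Module.End.mul_apply]

lemma fwdDiffElt_pow_mem_shiftAnnihilator_iff {f : M → G} {a : M} {k : ℕ} :
    fwdDiffElt a ^ k ∈ shiftAnnihilator f ↔ (fwdDiff a)^[k] f = 0 := by
  rw [← coe_fwdDiffₗ_pow, ← shiftAlgHom_fwdDiffElt, ← map_pow]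
  rfl

end ShiftAction

theorem iterated_diff_of_monoid_generators {M : Type*} [AddCommMonoid M] {t : ℕ}
    (g : Fin t → M) (hgen : AddSubmonoid.closure (Set.range g) = ⊤)
    (f : M → ℂ) (n : Fin t → ℕ)
    (hdiff : ∀ i : Fin t, ∀ x : M, (fdiff (g i))^[n i + 1] f x = 0) :
    ∀ x y : M, (fdiff y)^[((∑ i, n i) + t - 1) + 1] f x = 0 := by
  intro x y
  obtain ⟨c, rfl⟩ :=
    AddSubmonoid.mem_closure_range_iff_of_fintype.mp (hgen ▸ AddSubmonoid.mem_top y)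
  have hterm : ∀ i ∈ univ, fwdDiffElt (c i • g i) ^ (n i + 1) ∈ shiftAnnihilator f := fun i _ ↦
    fwdDiffElt_nsmul_pow_mem (fwdDiffElt_pow_mem_shiftAnnihilator_iff.mpr (funext (hdiff i))) _
  have hexp : (∑ i, n i) + 1 ≤ ((∑ i, n i) + t - 1) + 1 := by
    cases t <;> simp
  have hsum := Ideal.pow_mem_of_pow_mem _ (fwdDiffElt_sum_pow_mem univ hterm) hexp
  exact congrFun (fwdDiffElt_pow_mem_shiftAnnihilator_iff.mp hsum) x
end
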